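/- arXiv:1506.08420 — 6 statements merged into one kernel-verified Lean document; each statement's English description precedes it below -/
import Mathlib

section
/- Let G₁ be a linearly ordered group and G₂ a directed po-group. Then the lexicographic product G₁ ×lex G₂ satisfies RDP if and only if G₂ satisfies RDP. -/
/-! Riesz decomposition properties relative to explicit multiplication `mul`,
unit `one`, and order relation `le`, together with the lexicographic product
order and (unrestricted/restricted, right/left) wreath products of po-groups. -/

/-- The Riesz decomposition property (RDP). -/
def RDPWith {M : Type*} (mul : M → M → M) (one : M) (le : M → M → Prop) : Prop :=
  ∀ a₁ a₂ b₁ b₂ : M,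
    le one a₁ → le one a₂ → le one b₁ → le one b₂ → mul a₁ a₂ = mul b₁ b₂ →
    ∃ c₁₁ c₁₂ c₂₁ c₂₂ : M,
      le one c₁₁ ∧ le one c₁₂ ∧ le one c₂₁ ∧ le one c₂₂ ∧
      a₁ = mul c₁₁ c₁₂ ∧ a₂ = mul c₂₁ c₂₂ ∧ b₁ = mul c₁₁ c₂₁ ∧ b₂ = mul c₁₂ c₂₂

/-- The Riesz decomposition property RDP₁ (commutativity below the
cross-diagonal entries `c₁₂`, `c₂₁`). -/
def RDP1With {M : Type*} (mul : M → M → M) (one : M) (le : M → M → Prop) : Prop :=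
  ∀ a₁ a₂ b₁ b₂ : M,
    le one a₁ → le one a₂ → le one b₁ → le one b₂ → mul a₁ a₂ = mul b₁ b₂ →
    ∃ c₁₁ c₁₂ c₂₁ c₂₂ : M,
      le one c₁₁ ∧ le one c₁₂ ∧ le one c₂₁ ∧ le one c₂₂ ∧
      a₁ = mul c₁₁ c₁₂ ∧ a₂ = mul c₂₁ c₂₂ ∧ b₁ = mul c₁₁ c₂₁ ∧ b₂ = mul c₁₂ c₂₂ ∧
      (∀ x y : M, le one x → le x c₁₂ → le one y → le y c₂₁ → mul x y = mul y x)

/-- The Riesz decomposition property RDP₂ (the infimum of `c₁₂` and `c₂₁`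
exists and equals `one`; the last clause, together with `le one c₁₂` and
`le one c₂₁`, says exactly that `one` is the greatest lower bound). -/
def RDP2With {M : Type*} (mul : M → M → M) (one : M) (le : M → M → Prop) : Prop :=
  ∀ a₁ a₂ b₁ b₂ : M,
    le one a₁ → le one a₂ → le one b₁ → le one b₂ → mul a₁ a₂ = mul b₁ b₂ →
    ∃ c₁₁ c₁₂ c₂₁ c₂₂ : M,
      le one c₁₁ ∧ le one c₁₂ ∧ le one c₂₁ ∧ le one c₂₂ ∧
      a₁ = mul c₁₁ c₁₂ ∧ a₂ = mul c₂₁ c₂₂ ∧ b₁ = mul c₁₁ c₂₁ ∧ b₂ = mul c₁₂ c₂₂ ∧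
      (∀ z : M, le z c₁₂ → le z c₂₁ → le z one)

/-- RDP for the sub-po-group carried by the subset `S`. -/
def RDPWithOn {M : Type*} (S : Set M) (mul : M → M → M) (one : M)
    (le : M → M → Prop) : Prop :=
  ∀ a₁ a₂ b₁ b₂ : M, a₁ ∈ S → a₂ ∈ S → b₁ ∈ S → b₂ ∈ S →
    le one a₁ → le one a₂ → le one b₁ → le one b₂ → mul a₁ a₂ = mul b₁ b₂ →
    ∃ c₁₁ c₁₂ c₂₁ c₂₂ : M, c₁₁ ∈ S ∧ c₁₂ ∈ S ∧ c₂₁ ∈ S ∧ c₂₂ ∈ S ∧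
      le one c₁₁ ∧ le one c₁₂ ∧ le one c₂₁ ∧ le one c₂₂ ∧
      a₁ = mul c₁₁ c₁₂ ∧ a₂ = mul c₂₁ c₂₂ ∧ b₁ = mul c₁₁ c₂₁ ∧ b₂ = mul c₁₂ c₂₂

/-- RDP₁ for the sub-po-group carried by the subset `S`. -/
def RDP1WithOn {M : Type*} (S : Set M) (mul : M → M → M) (one : M)
    (le : M → M → Prop) : Prop :=
  ∀ a₁ a₂ b₁ b₂ : M, a₁ ∈ S → a₂ ∈ S → b₁ ∈ S → b₂ ∈ S →
    le one a₁ → le one a₂ → le one b₁ → le one b₂ → mul a₁ a₂ = mul b₁ b₂ →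
    ∃ c₁₁ c₁₂ c₂₁ c₂₂ : M, c₁₁ ∈ S ∧ c₁₂ ∈ S ∧ c₂₁ ∈ S ∧ c₂₂ ∈ S ∧
      le one c₁₁ ∧ le one c₁₂ ∧ le one c₂₁ ∧ le one c₂₂ ∧
      a₁ = mul c₁₁ c₁₂ ∧ a₂ = mul c₂₁ c₂₂ ∧ b₁ = mul c₁₁ c₂₁ ∧ b₂ = mul c₁₂ c₂₂ ∧
      (∀ x y : M, x ∈ S → y ∈ S →
        le one x → le x c₁₂ → le one y → le y c₂₁ → mul x y = mul y x)

/-- RDP₂ for the sub-po-group carried by the subset `S`. -/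
def RDP2WithOn {M : Type*} (S : Set M) (mul : M → M → M) (one : M)
    (le : M → M → Prop) : Prop :=
  ∀ a₁ a₂ b₁ b₂ : M, a₁ ∈ S → a₂ ∈ S → b₁ ∈ S → b₂ ∈ S →
    le one a₁ → le one a₂ → le one b₁ → le one b₂ → mul a₁ a₂ = mul b₁ b₂ →
    ∃ c₁₁ c₁₂ c₂₁ c₂₂ : M, c₁₁ ∈ S ∧ c₁₂ ∈ S ∧ c₂₁ ∈ S ∧ c₂₂ ∈ S ∧
      le one c₁₁ ∧ le one c₁₂ ∧ le one c₂₁ ∧ le one c₂₂ ∧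
      a₁ = mul c₁₁ c₁₂ ∧ a₂ = mul c₂₁ c₂₂ ∧ b₁ = mul c₁₁ c₂₁ ∧ b₂ = mul c₁₂ c₂₂ ∧
      (∀ z : M, z ∈ S → le z c₁₂ → le z c₂₁ → le z one)

/-- The Riesz interpolation property (RIP). -/
def RIPWith {M : Type*} (le : M → M → Prop) : Prop :=
  ∀ a₁ a₂ b₁ b₂ : M, le a₁ b₁ → le a₁ b₂ → le a₂ b₁ → le a₂ b₂ →
    ∃ c : M, le a₁ c ∧ le a₂ c ∧ le c b₁ ∧ le c b₂

/-- RIP for the subposet carried by the subset `S`. -/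
def RIPWithOn {M : Type*} (S : Set M) (le : M → M → Prop) : Prop :=
  ∀ a₁ a₂ b₁ b₂ : M, a₁ ∈ S → a₂ ∈ S → b₁ ∈ S → b₂ ∈ S →
    le a₁ b₁ → le a₁ b₂ → le a₂ b₁ → le a₂ b₂ →
    ∃ c ∈ S, le a₁ c ∧ le a₂ c ∧ le c b₁ ∧ le c b₂

/-- The lexicographic order on a product: `(g₁,h₁) ≤ (g₂,h₂)` iff `g₁ < g₂`,
or `g₁ = g₂` and `h₁ ≤ h₂`. -/
def lexLE {A B : Type*} [PartialOrder A] [LE B] (p q : A × B) : Prop :=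
  p.1 < q.1 ∨ (p.1 = q.1 ∧ p.2 ≤ q.2)

/-- A poset is an antilattice if only comparable pairs of elements have a
join or a meet. -/
def IsAntilattice (G : Type*) [PartialOrder G] : Prop :=
  ∀ a b : G, ((∃ s, IsLUB {a, b} s) ∨ (∃ s, IsGLB {a, b} s)) → a ≤ b ∨ b ≤ a

/-- Multiplication of the unrestricted Wreath product `A Wr G`:
`(n,⟨g_a⟩)·(m,⟨h_a⟩) = (n·m, ⟨g_a·h_{a·n}⟩)`. -/
def wrMul {A G : Type*} [Mul A] [Mul G] (p q : A × (A → G)) : A × (A → G) :=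
  (p.1 * q.1, fun a => p.2 a * q.2 (a * p.1))

/-- The unit of the Wreath product `A Wr G`. -/
def wrOne (A G : Type*) [One A] [One G] : A × (A → G) :=
  (1, fun _ => 1)

/-- The order of the Wreath product `A Wr G`: `(n,⟨g_a⟩) ≤ (m,⟨h_a⟩)` iff
`n < m`, or `n = m` and `g_a ≤ h_a` for all `a`. -/
def wrLE {A G : Type*} [PartialOrder A] [LE G] (p q : A × (A → G)) : Prop :=
  p.1 < q.1 ∨ (p.1 = q.1 ∧ ∀ a, p.2 a ≤ q.2 a)

/-- The carrier of the restricted Wreath product `A wr G`: elements whose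
second component equals `1` at all but finitely many places. -/
def wrS (A G : Type*) [One G] : Set (A × (A → G)) :=
  {p | (Function.mulSupport p.2).Finite}

/-- Multiplication of the wreath products over `ℤ`:
`(n,⟨g_i⟩)·(m,⟨h_i⟩) = (n+m, ⟨g_i·h_{i+n}⟩)`. -/
def zwrMul {G : Type*} [Mul G] (p q : ℤ × (ℤ → G)) : ℤ × (ℤ → G) :=
  (p.1 + q.1, fun i => p.2 i * q.2 (i + p.1))

/-- The unit of the wreath products over `ℤ`. -/
def zwrOne (G : Type*) [One G] : ℤ × (ℤ → G) :=
  (0, fun _ => 1)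

/-- The inverse in the wreath products over `ℤ`. -/
def zwrInv {G : Type*} [Inv G] (p : ℤ × (ℤ → G)) : ℤ × (ℤ → G) :=
  (-p.1, fun i => (p.2 (i - p.1))⁻¹)

/-- The carrier of the (restricted) wreath products over `ℤ`: elements with
`g_i = 1` for all but finitely many `i`. -/
def zwrS (G : Type*) [One G] : Set (ℤ × (ℤ → G)) :=
  {p | (Function.mulSupport p.2).Finite}

/-- Strict positivity in the right wreath product `ℤ →wr G`: either `n > 0`,
or `n = 0`, some `g_i ≠ 1`, and `g_j > 1` where `j` is the greatest index `i`
with `g_i ≠ 1`. -/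
def rPos {G : Type*} [One G] [LT G] (p : ℤ × (ℤ → G)) : Prop :=
  0 < p.1 ∨ (p.1 = 0 ∧ ∃ j : ℤ, 1 < p.2 j ∧ ∀ i : ℤ, j < i → p.2 i = 1)

/-- Strict positivity in the left wreath product `ℤ ←wr G`: either `n > 0`,
or `n = 0`, some `g_i ≠ 1`, and `g_j > 1` where `j` is the least index `i`
with `g_i ≠ 1`. -/
def lPos {G : Type*} [One G] [LT G] (p : ℤ × (ℤ → G)) : Prop :=
  0 < p.1 ∨ (p.1 = 0 ∧ ∃ j : ℤ, 1 < p.2 j ∧ ∀ i : ℤ, i < j → p.2 i = 1)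

/-- The order of the right wreath product `ℤ →wr G`. -/
def rLE {G : Type*} [Group G] [LT G] (p q : ℤ × (ℤ → G)) : Prop :=
  p = q ∨ rPos (zwrMul (zwrInv p) q)

/-- The order of the left wreath product `ℤ ←wr G`. -/
def lLE {G : Type*} [Group G] [LT G] (p q : ℤ × (ℤ → G)) : Prop :=
  p = q ∨ lPos (zwrMul (zwrInv p) q)

private lemma lex_aux_eq_one {G : Type*} [Group G] [PartialOrder G]
    [CovariantClass G G (· * ·) (· ≤ ·)]
    {x y : G} (hx : 1 ≤ x) (hy : 1 ≤ y) (h : x * y = 1) : x = 1 ∧ y = 1 := by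
  have hx1 : x ≤ 1 := by
    calc x = x * 1 := (mul_one x).symm
      _ ≤ x * y := mul_le_mul_right hy x
      _ = 1 := h
  have hx' : x = 1 := le_antisymm hx1 hx
  refine ⟨hx', ?_⟩
  rw [hx', one_mul] at h
  exact h

/-- For a linearly ordered group `G₁` and a directed po-group
`G₂`, the lexicographic product `G₁ ×lex G₂` satisfies RDP iff `G₂` does. -/
theorem lex_rdp_iff {G₁ G₂ : Type*} [Group G₁] [LinearOrder G₁]
    [CovariantClass G₁ G₁ (· * ·) (· ≤ ·)]
    [CovariantClass G₁ G₁ (Function.swap (· * ·)) (· ≤ ·)]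
    [Group G₂] [PartialOrder G₂]
    [CovariantClass G₂ G₂ (· * ·) (· ≤ ·)]
    [CovariantClass G₂ G₂ (Function.swap (· * ·)) (· ≤ ·)]
    (hdir : ∀ x y : G₂, ∃ z : G₂, x ≤ z ∧ y ≤ z) :
    RDPWith (fun p q : G₁ × G₂ => p * q) 1 lexLE ↔
      RDPWith (fun a b : G₂ => a * b) 1 (· ≤ ·) := by
  constructor
  · -- forward direction
    intro H a₁ a₂ b₁ b₂ ha₁ ha₂ hb₁ hb₂ heq
    obtain ⟨c₁₁, c₁₂, c₂₁, c₂₂, h11, h12, h21, h22, e1, e2, e3, e4⟩ :=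
      H ((1 : G₁), a₁) (1, a₂) (1, b₁) (1, b₂)
        (Or.inr ⟨rfl, ha₁⟩) (Or.inr ⟨rfl, ha₂⟩) (Or.inr ⟨rfl, hb₁⟩) (Or.inr ⟨rfl, hb₂⟩)
        (by simp only [Prod.mk_mul_mk, one_mul, heq])
    have fst_le : ∀ c : G₁ × G₂, lexLE 1 c → 1 ≤ c.1 := by
      rintro c (h | ⟨h, -⟩)
      · exact le_of_lt h
      · exact le_of_eq h
    have g1 : (1 : G₁) = c₁₁.1 * c₁₂.1 := congrArg Prod.fst e1
    have g2 : (1 : G₁) = c₂₁.1 * c₂₂.1 := congrArg Prod.fst e2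
    have g3 : (1 : G₁) = c₁₁.1 * c₂₁.1 := congrArg Prod.fst e3
    obtain ⟨k11, k12⟩ := lex_aux_eq_one (fst_le _ h11) (fst_le _ h12) g1.symm
    obtain ⟨k21, k22⟩ := lex_aux_eq_one (fst_le _ h21) (fst_le _ h22) g2.symm
    have snd_le : ∀ c : G₁ × G₂, lexLE 1 c → c.1 = 1 → 1 ≤ c.2 := by
      rintro c (h | ⟨-, h'⟩) hc
      · exact absurd (hc ▸ h) (lt_irrefl 1)
      · exact h'
    refine ⟨c₁₁.2, c₁₂.2, c₂₁.2, c₂₂.2, snd_le _ h11 k11, snd_le _ h12 k12,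
      snd_le _ h21 k21, snd_le _ h22 k22,
      congrArg Prod.snd e1, congrArg Prod.snd e2,
      congrArg Prod.snd e3, congrArg Prod.snd e4⟩
  · -- backward direction
    intro H p₁ p₂ q₁ q₂ hp₁ hp₂ hq₁ hq₂ heq
    simp only at heq
    have heq1 : p₁.1 * p₂.1 = q₁.1 * q₂.1 := congrArg Prod.fst heq
    have heq2 : p₁.2 * p₂.2 = q₁.2 * q₂.2 := congrArg Prod.snd heq
    rcases lt_trichotomy p₁.1 q₁.1 with h | h | h
    · refine ⟨p₁, 1, p₁⁻¹ * q₁, q₂, hp₁, Or.inr ⟨rfl, le_refl _⟩, ?_, hq₂,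
        (mul_one p₁).symm, ?_, (mul_inv_cancel_left p₁ q₁).symm, (one_mul q₂).symm⟩
      · exact Or.inl (lt_inv_mul_iff_lt.mpr h)
      · show p₂ = (p₁⁻¹ * q₁) * q₂
        rw [mul_assoc, ← heq, inv_mul_cancel_left]
    · -- p₁.1 = q₁.1
      have h2 : p₂.1 = q₂.1 := by
        have := heq1; rw [h] at this; exact mul_left_cancel this
      obtain ⟨d, hd0, hdα, hdβ⟩ :
          ∃ d : G₂, (p₁.1 = 1 → d = 1) ∧ 1 ≤ d * p₁.2 ∧ 1 ≤ d * q₁.2 := by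
        by_cases h1 : p₁.1 = 1
        · refine ⟨1, fun _ => rfl, ?_, ?_⟩
          · rcases hp₁ with hl | ⟨-, hle⟩
            · exact absurd (h1 ▸ hl) (lt_irrefl 1)
            · simpa using hle
          · rcases hq₁ with hl | ⟨-, hle⟩
            · exact absurd ((h ▸ h1) ▸ hl) (lt_irrefl 1)
            · simpa using hle
        · obtain ⟨d, hd1, hd2⟩ := hdir p₁.2⁻¹ q₁.2⁻¹
          exact ⟨d, fun hh => absurd hh h1,
            by simpa using mul_le_mul_left hd1 p₁.2,
            by simpa using mul_le_mul_left hd2 q₁.2⟩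
      obtain ⟨e, he0, heα, heβ⟩ :
          ∃ e : G₂, (p₂.1 = 1 → e = 1) ∧ 1 ≤ p₂.2 * e ∧ 1 ≤ q₂.2 * e := by
        by_cases h1 : p₂.1 = 1
        · refine ⟨1, fun _ => rfl, ?_, ?_⟩
          · rcases hp₂ with hl | ⟨-, hle⟩
            · exact absurd (h1 ▸ hl) (lt_irrefl 1)
            · simpa using hle
          · rcases hq₂ with hl | ⟨-, hle⟩
            · exact absurd ((h2 ▸ h1) ▸ hl) (lt_irrefl 1)
            · simpa using hle
        · obtain ⟨e, he1, he2⟩ := hdir p₂.2⁻¹ q₂.2⁻¹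
          exact ⟨e, fun hh => absurd hh h1,
            by simpa using mul_le_mul_right he1 p₂.2,
            by simpa using mul_le_mul_right he2 q₂.2⟩
      have key : (d * p₁.2) * (p₂.2 * e) = (d * q₁.2) * (q₂.2 * e) := by
        calc (d * p₁.2) * (p₂.2 * e) = d * (p₁.2 * p₂.2) * e := by
              rw [mul_assoc, mul_assoc, mul_assoc]
          _ = d * (q₁.2 * q₂.2) * e := by rw [heq2]
          _ = (d * q₁.2) * (q₂.2 * e) := by rw [mul_assoc, mul_assoc, mul_assoc]
      obtain ⟨δ₁₁, δ₁₂, δ₂₁, δ₂₂, k11, k12, k21, k22, f1, f2, f3, f4⟩ :=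
        H (d * p₁.2) (p₂.2 * e) (d * q₁.2) (q₂.2 * e) hdα heα hdβ heβ key
      simp only at f1 f2 f3 f4
      refine ⟨(p₁.1, d⁻¹ * δ₁₁), (1, δ₁₂), (1, δ₂₁), (p₂.1, δ₂₂ * e⁻¹),
        ?_, Or.inr ⟨rfl, k12⟩, Or.inr ⟨rfl, k21⟩, ?_, ?_, ?_, ?_, ?_⟩
      · rcases hp₁ with hl | ⟨hl, -⟩
        · exact Or.inl hl
        · refine Or.inr ⟨hl, ?_⟩
          rw [hd0 hl.symm, inv_one, one_mul] at *
          exact k11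
      · rcases hp₂ with hl | ⟨hl, -⟩
        · exact Or.inl hl
        · refine Or.inr ⟨hl, ?_⟩
          rw [he0 hl.symm, inv_one, mul_one] at *
          exact k22
      · -- p₁ = c₁₁ * c₁₂
        have : d⁻¹ * δ₁₁ * δ₁₂ = p₁.2 := by
          rw [mul_assoc, ← f1, inv_mul_cancel_left]
        exact Prod.ext (by simp) (by simpa using this.symm)
      · -- p₂ = c₂₁ * c₂₂
        have : δ₂₁ * (δ₂₂ * e⁻¹) = p₂.2 := by
          rw [← mul_assoc, ← f2, mul_inv_cancel_right]
        exact Prod.ext (by simp) (by simpa using this.symm)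
      · -- q₁ = c₁₁ * c₂₁
        have : d⁻¹ * δ₁₁ * δ₂₁ = q₁.2 := by
          rw [mul_assoc, ← f3, inv_mul_cancel_left]
        exact Prod.ext (by simpa using h.symm) (by simpa using this.symm)
      · -- q₂ = c₁₂ * c₂₂
        have : δ₁₂ * (δ₂₂ * e⁻¹) = q₂.2 := by
          rw [← mul_assoc, ← f4, mul_inv_cancel_right]
        exact Prod.ext (by simpa using h2.symm) (by simpa using this.symm)
    · refine ⟨q₁, q₁⁻¹ * p₁, 1, p₂, hq₁, ?_, Or.inr ⟨rfl, le_refl _⟩, hp₂,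
        (mul_inv_cancel_left q₁ p₁).symm, (one_mul p₂).symm, (mul_one q₁).symm, ?_⟩
      · exact Or.inl (lt_inv_mul_iff_lt.mpr h)
      · show q₂ = (q₁⁻¹ * p₁) * p₂
        rw [mul_assoc, heq, inv_mul_cancel_left]
end

section
/- Let G₁ be a linearly ordered group and G₂ a directed po-group. Then the lexicographic product G₁ ×lex G₂ satisfies RDP₁ if and only if G₂ satisfies RDP₁. -/
section LexHelpers

variable {G₁ G₂ : Type*} [Group G₁] [LinearOrder G₁]
    [Group G₂] [PartialOrder G₂]

set_option linter.unusedSectionVars false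

lemma lex_pos_mk {d : G₂} (hd : 1 ≤ d) : lexLE (1 : G₁ × G₂) ((1 : G₁), d) :=
  Or.inr ⟨rfl, hd⟩

lemma lex_sandwich {x : G₁ × G₂} {v : G₂} (h1 : lexLE 1 x) (h2 : lexLE x (1, v)) :
    x.1 = 1 ∧ 1 ≤ x.2 ∧ x.2 ≤ v := by
  rcases h1 with h1 | ⟨he1, hx2⟩ <;> rcases h2 with h2 | ⟨he2, hv⟩
  · exact absurd (h1.trans h2) (lt_irrefl _)
  · exact absurd (he2 ▸ h1) (lt_irrefl _)
  · exact absurd (he1 ▸ h2) (lt_irrefl _)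
  · exact ⟨he2, hx2, hv⟩

lemma pos_mul_eq_one {G : Type*} [Group G] [PartialOrder G]
    [CovariantClass G G (· * ·) (· ≤ ·)]
    {u v : G} (hu : 1 ≤ u) (hv : 1 ≤ v) (h : u * v = 1) : u = 1 ∧ v = 1 := by
  have hv' : v = u⁻¹ := eq_inv_of_mul_eq_one_right h
  have hvle : v ≤ 1 := hv' ▸ Left.inv_le_one_iff.mpr hu
  have hv1 : v = 1 := le_antisymm hvle hv
  refine ⟨?_, hv1⟩
  rw [hv1, mul_one] at h
  exact h

end LexHelpers

/-- For a linearly ordered group `G₁` and a directed po-group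
`G₂`, the lexicographic product `G₁ ×lex G₂` satisfies RDP₁ iff `G₂` does. -/
theorem lex_rdp1_iff {G₁ G₂ : Type*} [Group G₁] [LinearOrder G₁]
    [CovariantClass G₁ G₁ (· * ·) (· ≤ ·)]
    [CovariantClass G₁ G₁ (Function.swap (· * ·)) (· ≤ ·)]
    [Group G₂] [PartialOrder G₂]
    [CovariantClass G₂ G₂ (· * ·) (· ≤ ·)]
    [CovariantClass G₂ G₂ (Function.swap (· * ·)) (· ≤ ·)]
    (hdir : ∀ x y : G₂, ∃ z : G₂, x ≤ z ∧ y ≤ z) :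
    RDP1With (fun p q : G₁ × G₂ => p * q) 1 lexLE ↔
      RDP1With (fun a b : G₂ => a * b) 1 (· ≤ ·) := by
  constructor
  · -- lex RDP₁ → G₂ RDP₁
    intro H a₁ a₂ b₁ b₂ ha₁ ha₂ hb₁ hb₂ heq
    obtain ⟨c₁₁, c₁₂, c₂₁, c₂₂, p₁₁, p₁₂, p₂₁, p₂₂, e₁, e₂, e₃, e₄, hcl⟩ :=
      H ((1 : G₁), a₁) (1, a₂) (1, b₁) (1, b₂) (lex_pos_mk ha₁) (lex_pos_mk ha₂)
        (lex_pos_mk hb₁) (lex_pos_mk hb₂)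
        (by show ((1 : G₁), a₁) * (1, a₂) = ((1 : G₁), b₁) * (1, b₂)
            have heq'' : a₁ * a₂ = b₁ * b₂ := heq
            rw [Prod.mk_mul_mk, Prod.mk_mul_mk, heq''])
    have e₁' : ((1 : G₁), a₁) = c₁₁ * c₁₂ := e₁
    have e₂' : ((1 : G₁), a₂) = c₂₁ * c₂₂ := e₂
    have e₃' : ((1 : G₁), b₁) = c₁₁ * c₂₁ := e₃
    have e₄' : ((1 : G₁), b₂) = c₁₂ * c₂₂ := e₄
    have p₁₁' : 1 < c₁₁.1 ∨ (1 = c₁₁.1 ∧ 1 ≤ c₁₁.2) := p₁₁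
    have p₁₂' : 1 < c₁₂.1 ∨ (1 = c₁₂.1 ∧ 1 ≤ c₁₂.2) := p₁₂
    have p₂₁' : 1 < c₂₁.1 ∨ (1 = c₂₁.1 ∧ 1 ≤ c₂₁.2) := p₂₁
    have p₂₂' : 1 < c₂₂.1 ∨ (1 = c₂₂.1 ∧ 1 ≤ c₂₂.2) := p₂₂
    have q₁₁ : (1 : G₁) ≤ c₁₁.1 := by rcases p₁₁' with h | h; exacts [h.le, h.1.le]
    have q₁₂ : (1 : G₁) ≤ c₁₂.1 := by rcases p₁₂' with h | h; exacts [h.le, h.1.le]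
    have q₂₁ : (1 : G₁) ≤ c₂₁.1 := by rcases p₂₁' with h | h; exacts [h.le, h.1.le]
    have q₂₂ : (1 : G₁) ≤ c₂₂.1 := by rcases p₂₂' with h | h; exacts [h.le, h.1.le]
    have f₁ : c₁₁.1 * c₁₂.1 = 1 := by
      have := congrArg Prod.fst e₁'; simpa using this.symm
    have f₂ : c₂₁.1 * c₂₂.1 = 1 := by
      have := congrArg Prod.fst e₂'; simpa using this.symm
    obtain ⟨g₁₁, g₁₂⟩ := pos_mul_eq_one q₁₁ q₁₂ f₁
    obtain ⟨g₂₁, g₂₂⟩ := pos_mul_eq_one q₂₁ q₂₂ f₂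
    have r₁₁ : (1 : G₂) ≤ c₁₁.2 := by
      rcases p₁₁' with h | h
      · exact absurd (g₁₁ ▸ h) (lt_irrefl _)
      · exact h.2
    have r₁₂ : (1 : G₂) ≤ c₁₂.2 := by
      rcases p₁₂' with h | h
      · exact absurd (g₁₂ ▸ h) (lt_irrefl _)
      · exact h.2
    have r₂₁ : (1 : G₂) ≤ c₂₁.2 := by
      rcases p₂₁' with h | h
      · exact absurd (g₂₁ ▸ h) (lt_irrefl _)
      · exact h.2
    have r₂₂ : (1 : G₂) ≤ c₂₂.2 := by
      rcases p₂₂' with h | h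
      · exact absurd (g₂₂ ▸ h) (lt_irrefl _)
      · exact h.2
    refine ⟨c₁₁.2, c₁₂.2, c₂₁.2, c₂₂.2, r₁₁, r₁₂, r₂₁, r₂₂, ?_, ?_, ?_, ?_, ?_⟩
    · have := congrArg Prod.snd e₁'; simpa using this
    · have := congrArg Prod.snd e₂'; simpa using this
    · have := congrArg Prod.snd e₃'; simpa using this
    · have := congrArg Prod.snd e₄'; simpa using this
    · intro x y hx1 hx2 hy1 hy2
      have hx : lexLE ((1 : G₁), x) c₁₂ := by
        rcases c₁₂ with ⟨cf, cs⟩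
        exact Or.inr ⟨g₁₂.symm, hx2⟩
      have hy : lexLE ((1 : G₁), y) c₂₁ := by
        rcases c₂₁ with ⟨cf, cs⟩
        exact Or.inr ⟨g₂₁.symm, hy2⟩
      have := hcl ((1 : G₁), x) ((1 : G₁), y) (lex_pos_mk hx1) hx (lex_pos_mk hy1) hy
      have h2 : ((1 : G₁), x) * ((1 : G₁), y) = ((1 : G₁), y) * ((1 : G₁), x) := this
      have := congrArg Prod.snd h2
      simpa using this
  · -- G₂ RDP₁ → lex RDP₁
    intro H a₁ a₂ b₁ b₂ pa₁ pa₂ pb₁ pb₂ heq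
    obtain ⟨g₁, h₁⟩ := a₁
    obtain ⟨g₂, h₂⟩ := a₂
    obtain ⟨k₁, l₁⟩ := b₁
    obtain ⟨k₂, l₂⟩ := b₂
    have pa₁' : 1 < g₁ ∨ (1 = g₁ ∧ 1 ≤ h₁) := pa₁
    have pa₂' : 1 < g₂ ∨ (1 = g₂ ∧ 1 ≤ h₂) := pa₂
    have pb₁' : 1 < k₁ ∨ (1 = k₁ ∧ 1 ≤ l₁) := pb₁
    have pb₂' : 1 < k₂ ∨ (1 = k₂ ∧ 1 ≤ l₂) := pb₂
    have heq' : (g₁, h₁) * (g₂, h₂) = ((k₁, l₁) : G₁ × G₂) * (k₂, l₂) := heq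
    rw [Prod.mk_mul_mk, Prod.mk_mul_mk, Prod.mk.injEq] at heq'
    obtain ⟨heq1, heq2⟩ := heq'
    rcases lt_trichotomy g₁ k₁ with hlt | heqg | hgt
    · -- a₁ < b₁ strictly in the first component
      refine ⟨(g₁, h₁), 1, (g₁⁻¹ * k₁, h₁⁻¹ * l₁), (k₂, l₂),
        pa₁, Or.inr ⟨rfl, le_rfl⟩, Or.inl (lt_inv_mul_iff_lt.mpr hlt), pb₂,
        (mul_one _).symm, ?_, ?_, (one_mul _).symm, ?_⟩
      · show ((g₂ : G₁), (h₂ : G₂)) = _ * _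
        rw [Prod.mk_mul_mk]
        refine Prod.ext ?_ ?_
        · show g₂ = g₁⁻¹ * k₁ * k₂
          rw [mul_assoc, ← heq1, inv_mul_cancel_left]
        · show h₂ = h₁⁻¹ * l₁ * l₂
          rw [mul_assoc, ← heq2, inv_mul_cancel_left]
      · show ((k₁ : G₁), (l₁ : G₂)) = _ * _
        rw [Prod.mk_mul_mk, mul_inv_cancel_left, mul_inv_cancel_left]
      · intro x y hx1 hx2 hy1 hy2
        have hx2' : lexLE x ((1 : G₁), (1 : G₂)) := hx2
        obtain ⟨hxf, hxa, hxb⟩ := lex_sandwich hx1 hx2'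
        have hx : x = 1 := Prod.ext hxf (le_antisymm hxb hxa)
        show x * y = y * x
        rw [hx, one_mul, mul_one]
    case inr.inl =>
      -- equal first components
      subst heqg
      have hk₂ : g₂ = k₂ := mul_left_cancel heq1
      subst hk₂
      rcases pa₂' with hg₂ | ⟨hg₂, hh₂⟩
      · -- Construction A : g₂ > 1
        obtain ⟨p, hp₁, hpl, hpg⟩ : ∃ p : G₂, p ≤ h₁ ∧ p ≤ l₁ ∧ (1 = g₁ → 1 ≤ p) := by
          rcases pa₁' with hg | ⟨hg, hh⟩
          · obtain ⟨z, hz1, hz2⟩ := hdir (h₁ * l₁⁻¹) 1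
            refine ⟨z⁻¹ * h₁, ?_, ?_, fun he => absurd (he ▸ hg) (lt_irrefl _)⟩
            · calc z⁻¹ * h₁ ≤ 1 * h₁ := by
                    exact mul_le_mul_left (Left.inv_le_one_iff.mpr hz2) h₁
                _ = h₁ := one_mul _
            · rw [inv_mul_le_iff_le_mul]
              calc h₁ = h₁ * l₁⁻¹ * l₁ := by rw [inv_mul_cancel_right]
                _ ≤ z * l₁ := mul_le_mul_left hz1 l₁
          · rcases pb₁' with hk | ⟨hk, hl⟩
            · exact absurd (hg ▸ hk) (lt_irrefl _)
            · exact ⟨1, hh, hl, fun _ => le_rfl⟩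
        obtain ⟨z, hz1, hz2⟩ := hdir (p⁻¹ * h₁) (p⁻¹ * l₁)
        obtain ⟨d₁₁, d₁₂, d₂₁, d₂₂, q₁₁, q₁₂, q₂₁, q₂₂, f₁, f₂, f₃, f₄, dcl⟩ :=
          H (p⁻¹ * h₁) ((p⁻¹ * h₁)⁻¹ * z) (p⁻¹ * l₁) ((p⁻¹ * l₁)⁻¹ * z)
            (le_inv_mul_iff_le.mpr hp₁) (le_inv_mul_iff_le.mpr hz1)
            (le_inv_mul_iff_le.mpr hpl) (le_inv_mul_iff_le.mpr hz2)
            (by show _ * _ = _ * _; rw [mul_inv_cancel_left, mul_inv_cancel_left])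
        have f₁' : p⁻¹ * h₁ = d₁₁ * d₁₂ := f₁
        have f₃' : p⁻¹ * l₁ = d₁₁ * d₂₁ := f₃
        have hcomm : d₁₂ * d₂₁ = d₂₁ * d₁₂ := dcl d₁₂ d₂₁ q₁₂ le_rfl q₂₁ le_rfl
        have e_h₁ : h₁ = p * d₁₁ * d₁₂ := by
          rw [mul_assoc, ← f₁', mul_inv_cancel_left]
        have e_l₁ : l₁ = p * d₁₁ * d₂₁ := by
          rw [mul_assoc, ← f₃', mul_inv_cancel_left]
        have e_l₂ : l₂ = d₁₂ * (d₂₁⁻¹ * h₂) := by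
          apply mul_left_cancel (a := l₁)
          rw [← heq2, e_h₁, e_l₁]
          calc p * d₁₁ * d₁₂ * h₂
              = p * d₁₁ * (d₁₂ * d₂₁) * (d₂₁⁻¹ * h₂) := by group
            _ = p * d₁₁ * (d₂₁ * d₁₂) * (d₂₁⁻¹ * h₂) := by rw [hcomm]
            _ = p * d₁₁ * d₂₁ * (d₁₂ * (d₂₁⁻¹ * h₂)) := by group
        refine ⟨(g₁, p * d₁₁), ((1 : G₁), d₁₂), ((1 : G₁), d₂₁), (g₂, d₂₁⁻¹ * h₂),
          ?_, lex_pos_mk q₁₂, lex_pos_mk q₂₁, Or.inl hg₂, ?_, ?_, ?_, ?_, ?_⟩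
        · rcases pa₁' with hg | ⟨hg, _⟩
          · exact Or.inl hg
          · exact Or.inr ⟨hg, one_le_mul (hpg hg) q₁₁⟩
        · show ((g₁ : G₁), h₁) = _ * _
          rw [Prod.mk_mul_mk, mul_one, e_h₁]
        · show ((g₂ : G₁), h₂) = _ * _
          rw [Prod.mk_mul_mk, one_mul, mul_inv_cancel_left]
        · show ((g₁ : G₁), l₁) = _ * _
          rw [Prod.mk_mul_mk, mul_one, e_l₁]
        · show ((g₂ : G₁), l₂) = _ * _
          rw [Prod.mk_mul_mk, one_mul, e_l₂]
        · intro x y hx1 hx2 hy1 hy2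
          obtain ⟨hxf, hxa, hxb⟩ := lex_sandwich hx1 hx2
          obtain ⟨hyf, hya, hyb⟩ := lex_sandwich hy1 hy2
          show x * y = y * x
          refine Prod.ext ?_ ?_
          · show x.1 * y.1 = y.1 * x.1
            rw [hxf, hyf]
          · exact dcl x.2 y.2 hxa hxb hya hyb
      · -- g₂ = 1
        have hl₂ : (1 : G₂) ≤ l₂ := by
          rcases pb₂' with hk | ⟨_, hl⟩
          · exact absurd (hg₂ ▸ hk) (lt_irrefl _)
          · exact hl
        subst hg₂
        rcases pa₁' with hg₁ | ⟨hg₁, hh₁⟩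
        · -- Construction B : g₁ > 1, g₂ = 1
          obtain ⟨z, hz1, hz2⟩ := hdir h₂ l₂
          obtain ⟨d₁₁, d₁₂, d₂₁, d₂₂, q₁₁, q₁₂, q₂₁, q₂₂, f₁, f₂, f₃, f₄, dcl⟩ :=
            H (z * h₂⁻¹) h₂ (z * l₂⁻¹) l₂
              (by have := mul_le_mul_left hz1 h₂⁻¹; rwa [mul_inv_cancel] at this)
              hh₂
              (by have := mul_le_mul_left hz2 l₂⁻¹; rwa [mul_inv_cancel] at this)
              hl₂
              (by show _ * _ = _ * _; rw [inv_mul_cancel_right, inv_mul_cancel_right])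
          have f₂' : h₂ = d₂₁ * d₂₂ := f₂
          have f₄' : l₂ = d₁₂ * d₂₂ := f₄
          have hcomm : d₁₂ * d₂₁ = d₂₁ * d₁₂ := dcl d₁₂ d₂₁ q₁₂ le_rfl q₂₁ le_rfl
          have e_l₁ : l₁ = h₁ * d₁₂⁻¹ * d₂₁ := by
            apply mul_right_cancel (b := l₂)
            rw [← heq2, f₂', f₄']
            calc h₁ * (d₂₁ * d₂₂)
                = h₁ * d₁₂⁻¹ * (d₁₂ * d₂₁) * d₂₂ := by group
              _ = h₁ * d₁₂⁻¹ * (d₂₁ * d₁₂) * d₂₂ := by rw [hcomm]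
              _ = h₁ * d₁₂⁻¹ * d₂₁ * (d₁₂ * d₂₂) := by group
          refine ⟨(g₁, h₁ * d₁₂⁻¹), ((1 : G₁), d₁₂), ((1 : G₁), d₂₁), ((1 : G₁), d₂₂),
            Or.inl hg₁, lex_pos_mk q₁₂, lex_pos_mk q₂₁, lex_pos_mk q₂₂,
            ?_, ?_, ?_, ?_, ?_⟩
          · show ((g₁ : G₁), h₁) = _ * _
            rw [Prod.mk_mul_mk, mul_one, inv_mul_cancel_right]
          · show ((1 : G₁), h₂) = _ * _
            rw [Prod.mk_mul_mk, one_mul, f₂']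
          · show ((g₁ : G₁), l₁) = _ * _
            rw [Prod.mk_mul_mk, mul_one, e_l₁]
          · show ((1 : G₁), l₂) = _ * _
            rw [Prod.mk_mul_mk, one_mul, f₄']
          · intro x y hx1 hx2 hy1 hy2
            obtain ⟨hxf, hxa, hxb⟩ := lex_sandwich hx1 hx2
            obtain ⟨hyf, hya, hyb⟩ := lex_sandwich hy1 hy2
            show x * y = y * x
            refine Prod.ext ?_ ?_
            · show x.1 * y.1 = y.1 * x.1
              rw [hxf, hyf]
            · exact dcl x.2 y.2 hxa hxb hya hyb
        · -- Construction C : g₁ = 1, g₂ = 1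
          have hl₁ : (1 : G₂) ≤ l₁ := by
            rcases pb₁' with hk | ⟨_, hl⟩
            · exact absurd (hg₁ ▸ hk) (lt_irrefl _)
            · exact hl
          subst hg₁
          obtain ⟨d₁₁, d₁₂, d₂₁, d₂₂, q₁₁, q₁₂, q₂₁, q₂₂, f₁, f₂, f₃, f₄, dcl⟩ :=
            H h₁ h₂ l₁ l₂ hh₁ hh₂ hl₁ hl₂ heq2
          have f₁' : h₁ = d₁₁ * d₁₂ := f₁
          have f₂' : h₂ = d₂₁ * d₂₂ := f₂
          have f₃' : l₁ = d₁₁ * d₂₁ := f₃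
          have f₄' : l₂ = d₁₂ * d₂₂ := f₄
          refine ⟨((1 : G₁), d₁₁), ((1 : G₁), d₁₂), ((1 : G₁), d₂₁), ((1 : G₁), d₂₂),
            lex_pos_mk q₁₁, lex_pos_mk q₁₂, lex_pos_mk q₂₁, lex_pos_mk q₂₂,
            ?_, ?_, ?_, ?_, ?_⟩
          · show ((1 : G₁), h₁) = _ * _
            rw [Prod.mk_mul_mk, one_mul, f₁']
          · show ((1 : G₁), h₂) = _ * _
            rw [Prod.mk_mul_mk, one_mul, f₂']
          · show ((1 : G₁), l₁) = _ * _
            rw [Prod.mk_mul_mk, one_mul, f₃']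
          · show ((1 : G₁), l₂) = _ * _
            rw [Prod.mk_mul_mk, one_mul, f₄']
          · intro x y hx1 hx2 hy1 hy2
            obtain ⟨hxf, hxa, hxb⟩ := lex_sandwich hx1 hx2
            obtain ⟨hyf, hya, hyb⟩ := lex_sandwich hy1 hy2
            show x * y = y * x
            refine Prod.ext ?_ ?_
            · show x.1 * y.1 = y.1 * x.1
              rw [hxf, hyf]
            · exact dcl x.2 y.2 hxa hxb hya hyb
    · -- b₁ < a₁ strictly in the first component
      refine ⟨(k₁, l₁), (k₁⁻¹ * g₁, l₁⁻¹ * h₁), 1, (g₂, h₂),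
        pb₁, Or.inl (lt_inv_mul_iff_lt.mpr hgt), Or.inr ⟨rfl, le_rfl⟩, pa₂,
        ?_, (one_mul _).symm, (mul_one _).symm, ?_, ?_⟩
      · show ((g₁ : G₁), (h₁ : G₂)) = _ * _
        rw [Prod.mk_mul_mk, mul_inv_cancel_left, mul_inv_cancel_left]
      · show ((k₂ : G₁), (l₂ : G₂)) = _ * _
        rw [Prod.mk_mul_mk]
        refine Prod.ext ?_ ?_
        · show k₂ = k₁⁻¹ * g₁ * g₂
          rw [mul_assoc, heq1, inv_mul_cancel_left]
        · show l₂ = l₁⁻¹ * h₁ * h₂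
          rw [mul_assoc, heq2, inv_mul_cancel_left]
      · intro x y hx1 hx2 hy1 hy2
        have hy2' : lexLE y ((1 : G₁), (1 : G₂)) := hy2
        obtain ⟨hyf, hya, hyb⟩ := lex_sandwich hy1 hy2'
        have hy : y = 1 := Prod.ext hyf (le_antisymm hyb hya)
        show x * y = y * x
        rw [hy, one_mul, mul_one]
end

section
/- Let G₁ be a linearly ordered group and G₂ a directed po-group. Then the lexicographic product G₁ ×lex G₂ satisfies RDP₂ if and only if G₂ satisfies RDP₂. -/
/-!
Suppose `a₁ a₂ = b₁ b₂` with all four factors positive in `G₁ ×lex G₂`. If the first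
coordinates of `a₁` and `b₁` differ, say `a₁.1 < b₁.1`, then `a₁⁻¹ b₁` is positive and
`c = (a₁, 1, a₁⁻¹ b₁, b₂)` is a decomposition, whose infimum condition is trivial because
`c₁₂ = 1`. Otherwise the first coordinates of `a₁, b₁` and of `a₂, b₂` agree, and the
decomposition is found in `G₂`: in a directed RDP₂ group two elements above `m` can be written
as `w q`, `w r` (or `q s`, `r s`) with `m ≤ w` (or `m ≤ s`) and `q ∧ r = 1`, and `q ∧ r = 1`
forces `q r = r q`. A corner whose first coordinate is `> 1` is positive whatever its second
coordinate, so it absorbs the rest of the equation, and commutativity of `q, r` makes the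
fourth equation hold.

Conversely, `G₂` sits in the product as `{1} × G₂`, and a decomposition of elements of
`{1} × G₂` stays there because positive elements of `G₁` with product `1` are trivial.
-/

section PoGroup

variable {G : Type*} [Group G] [PartialOrder G] [MulLeftMono G] [MulRightMono G]

theorem mul_le_of_lowerBounds_le_one {q r u : G} (h : ∀ z, z ≤ q → z ≤ r → z ≤ 1)
    (hqu : q ≤ u) (hru : r ≤ u) : r * q ≤ u := by
  have hz : q * (u⁻¹ * r) ≤ 1 :=
    h _ (mul_le_of_le_one_right' (inv_mul_le_one_iff.mpr hru))
      (by simpa only [mul_assoc] using mul_le_of_le_one_left' (mul_inv_le_one_iff_le.mpr hqu))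
  have : u⁻¹ * (r * q) ≤ 1 := by
    simpa only [mul_assoc, inv_mul_cancel_left, mul_one, inv_mul_cancel] using
      mul_le_mul_left (mul_le_mul_right hz q⁻¹) q
  exact inv_mul_le_one_iff.mp this

theorem commute_of_lowerBounds_le_one {q r : G} (hq : 1 ≤ q) (hr : 1 ≤ r)
    (h : ∀ z, z ≤ q → z ≤ r → z ≤ 1) : Commute q r :=
  le_antisymm
    (mul_le_of_lowerBounds_le_one (fun z hzr hzq => h z hzq hzr)
      (le_mul_of_one_le_right' hq) (le_mul_of_one_le_left' hr))
    (mul_le_of_lowerBounds_le_one h (le_mul_of_one_le_right' hr) (le_mul_of_one_le_left' hq))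

theorem exists_le_le_of_isDirectedOrder [IsDirectedOrder G] (a b : G) :
    ∃ c, c ≤ a ∧ c ≤ b :=
  let ⟨d, had, hbd⟩ := exists_ge_ge a⁻¹ b⁻¹
  ⟨d⁻¹, inv_le_of_inv_le' had, inv_le_of_inv_le' hbd⟩

end PoGroup

section RDP2

variable {G : Type*} [Group G] [PartialOrder G] [IsDirectedOrder G]

theorem RDP2With.exists_eq_mul_eq_mul_left [MulLeftMono G]
    (H : RDP2With (· * ·) (1 : G) (· ≤ ·))
    {m u v : G} (hu : m ≤ u) (hv : m ≤ v) :
    ∃ w q r : G, m ≤ w ∧ 1 ≤ q ∧ 1 ≤ r ∧ (∀ z, z ≤ q → z ≤ r → z ≤ 1) ∧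
      u = w * q ∧ v = w * r := by
  obtain ⟨d, hud, hvd⟩ := exists_ge_ge (m⁻¹ * u) (m⁻¹ * v)
  obtain ⟨p, q, r, -, hp, hq, hr, -, hpq, -, hpr, -, hqr⟩ :=
    H (m⁻¹ * u) ((m⁻¹ * u)⁻¹ * d) (m⁻¹ * v) ((m⁻¹ * v)⁻¹ * d)
      (le_inv_mul_iff_le.mpr hu) (le_inv_mul_iff_le.mpr hud)
      (le_inv_mul_iff_le.mpr hv) (le_inv_mul_iff_le.mpr hvd)
      (by simp only [mul_inv_cancel_left])
  refine ⟨m * p, q, r, le_mul_of_one_le_right' hp, hq, hr, hqr, ?_, ?_⟩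
  · rw [mul_assoc]; exact inv_mul_eq_iff_eq_mul.mp hpq
  · rw [mul_assoc]; exact inv_mul_eq_iff_eq_mul.mp hpr

theorem RDP2With.exists_eq_mul_eq_mul_right [MulRightMono G]
    (H : RDP2With (· * ·) (1 : G) (· ≤ ·))
    {m u v : G} (hu : m ≤ u) (hv : m ≤ v) :
    ∃ q r s : G, 1 ≤ q ∧ 1 ≤ r ∧ (∀ z, z ≤ q → z ≤ r → z ≤ 1) ∧ m ≤ s ∧
      u = q * s ∧ v = r * s := by
  obtain ⟨d, hud, hvd⟩ := exists_ge_ge (u * m⁻¹) (v * m⁻¹)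
  obtain ⟨-, r, q, s, -, hr, hq, hs, -, hqs, -, hrs, hrq⟩ :=
    H (d * (u * m⁻¹)⁻¹) (u * m⁻¹) (d * (v * m⁻¹)⁻¹) (v * m⁻¹)
      (le_mul_inv_iff_le.mpr hud) (le_mul_inv_iff_le.mpr hu)
      (le_mul_inv_iff_le.mpr hvd) (le_mul_inv_iff_le.mpr hv)
      (by simp only [inv_mul_cancel_right])
  refine ⟨q, r, s * m, hq, hr, fun z hzq hzr => hrq z hzr hzq, le_mul_of_one_le_left' hs,
    ?_, ?_⟩
  · rw [← mul_assoc]; exact mul_inv_eq_iff_eq_mul.mp hqs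
  · rw [← mul_assoc]; exact mul_inv_eq_iff_eq_mul.mp hrs

end RDP2

def RDP2Decomposition {M : Type*} (mul : M → M → M) (one : M) (le : M → M → Prop)
    (a₁ a₂ b₁ b₂ : M) : Prop :=
  ∃ c₁₁ c₁₂ c₂₁ c₂₂ : M,
    le one c₁₁ ∧ le one c₁₂ ∧ le one c₂₁ ∧ le one c₂₂ ∧
    a₁ = mul c₁₁ c₁₂ ∧ a₂ = mul c₂₁ c₂₂ ∧ b₁ = mul c₁₁ c₂₁ ∧ b₂ = mul c₁₂ c₂₂ ∧
    (∀ z : M, le z c₁₂ → le z c₂₁ → le z one)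

theorem RDP2Decomposition.symm {M : Type*} {mul : M → M → M} {one : M} {le : M → M → Prop}
    {a₁ a₂ b₁ b₂ : M} (h : RDP2Decomposition mul one le a₁ a₂ b₁ b₂) :
    RDP2Decomposition mul one le b₁ b₂ a₁ a₂ :=
  let ⟨c₁₁, c₁₂, c₂₁, c₂₂, h₁₁, h₁₂, h₂₁, h₂₂, ha₁, ha₂, hb₁, hb₂, hinf⟩ := h
  ⟨c₁₁, c₂₁, c₁₂, c₂₂, h₁₁, h₂₁, h₁₂, h₂₂, hb₁, hb₂, ha₁, ha₂, fun z h₂₁ h₁₂ => hinf z h₁₂ h₂₁⟩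

section LexLE

variable {A B : Type*} [PartialOrder A]

theorem lexLE.fst_le [LE B] {p q : A × B} (h : lexLE p q) : p.1 ≤ q.1 :=
  h.elim le_of_lt fun h => h.1.le

theorem lexLE_mk_mk_iff [LE B] {x : A} {g h : B} : lexLE (x, g) (x, h) ↔ g ≤ h := by
  simp [lexLE]

theorem lexLE.mono_right [Preorder B] {p : A × B} {x : A} {m w : B} (h : lexLE p (x, m))
    (hmw : m ≤ w) : lexLE p (x, w) :=
  h.imp id fun h => ⟨h.1, h.2.trans hmw⟩

theorem forall_lexLE_mk_one_iff [One A] [LE B] [One B] {q r : B} :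
    (∀ z : A × B, lexLE z (1, q) → lexLE z (1, r) → lexLE z 1) ↔
      ∀ z : B, z ≤ q → z ≤ r → z ≤ 1 := by
  refine ⟨fun h z hzq hzr => lexLE_mk_mk_iff.mp (h (1, z) (lexLE_mk_mk_iff.mpr hzq)
    (lexLE_mk_mk_iff.mpr hzr)), ?_⟩
  rintro h ⟨x, z⟩ (hx | ⟨rfl, hzq⟩) hzr
  · exact Or.inl hx
  · exact Or.inr ⟨rfl, h z hzq (lexLE_mk_mk_iff.mp hzr)⟩

end LexLE

theorem RDP2With.of_lex {G₁ G₂ : Type*} [Monoid G₁] [PartialOrder G₁] [MulLeftMono G₁]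
    [MulRightMono G₁] [Monoid G₂] [LE G₂]
    (H : RDP2With (· * ·) (1 : G₁ × G₂) lexLE) :
    RDP2With (· * ·) (1 : G₂) (· ≤ ·) := by
  intro a₁ a₂ b₁ b₂ ha₁ ha₂ hb₁ hb₂ h
  obtain ⟨⟨x₁₁, c₁₁⟩, ⟨x₁₂, c₁₂⟩, ⟨x₂₁, c₂₁⟩, ⟨x₂₂, c₂₂⟩, h₁₁, h₁₂, h₂₁, h₂₂,
      ha₁', ha₂', hb₁', hb₂', hinf⟩ :=
    H (1, a₁) (1, a₂) (1, b₁) (1, b₂) (lexLE_mk_mk_iff.mpr ha₁) (lexLE_mk_mk_iff.mpr ha₂)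
      (lexLE_mk_mk_iff.mpr hb₁) (lexLE_mk_mk_iff.mpr hb₂)
      (by simp only [Prod.mk_mul_mk, one_mul, h])
  simp only [Prod.mk_mul_mk, Prod.mk.injEq] at ha₁' ha₂' hb₁' hb₂'
  obtain ⟨rfl, rfl⟩ := (mul_eq_one_iff_of_one_le h₁₁.fst_le h₁₂.fst_le).mp ha₁'.1.symm
  obtain ⟨rfl, rfl⟩ := (mul_eq_one_iff_of_one_le h₂₁.fst_le h₂₂.fst_le).mp ha₂'.1.symm
  exact ⟨c₁₁, c₁₂, c₂₁, c₂₂, lexLE_mk_mk_iff.mp h₁₁, lexLE_mk_mk_iff.mp h₁₂,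
    lexLE_mk_mk_iff.mp h₂₁, lexLE_mk_mk_iff.mp h₂₂, ha₁'.2, ha₂'.2, hb₁'.2, hb₂'.2,
    forall_lexLE_mk_one_iff.mp hinf⟩

theorem lex_rdp2Decomposition_of_fst_lt {G₁ G₂ : Type*} [Group G₁] [PartialOrder G₁]
    [MulLeftStrictMono G₁] [Group G₂] [Preorder G₂] {a₁ a₂ b₁ b₂ : G₁ × G₂}
    (ha₁ : lexLE 1 a₁) (hb₂ : lexLE 1 b₂) (h : a₁ * a₂ = b₁ * b₂) (hlt : a₁.1 < b₁.1) :
    RDP2Decomposition (· * ·) 1 lexLE a₁ a₂ b₁ b₂ :=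
  ⟨a₁, 1, a₁⁻¹ * b₁, b₂, ha₁, lexLE_mk_mk_iff.mpr le_rfl, Or.inl (lt_inv_mul_iff_lt.mpr hlt),
    hb₂, (mul_one a₁).symm, (eq_inv_mul_of_mul_eq h).trans (mul_assoc _ _ _).symm,
    (mul_inv_cancel_left a₁ b₁).symm, (one_mul b₂).symm, fun _ hz _ => hz⟩

theorem RDP2With.lex_rdp2Decomposition_of_fst_eq_one {G₁ G₂ : Type*} [MulOneClass G₁]
    [PartialOrder G₁] [MulOneClass G₂] [LE G₂] (H : RDP2With (· * ·) (1 : G₂) (· ≤ ·))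
    {g₁ g₂ h₁ h₂ : G₂}
    (hg₁ : 1 ≤ g₁) (hg₂ : 1 ≤ g₂) (hh₁ : 1 ≤ h₁) (hh₂ : 1 ≤ h₂) (h : g₁ * g₂ = h₁ * h₂) :
    RDP2Decomposition (· * ·) 1 lexLE ((1 : G₁), g₁) (1, g₂) (1, h₁) (1, h₂) := by
  obtain ⟨c₁₁, c₁₂, c₂₁, c₂₂, h₁₁, h₁₂, h₂₁, h₂₂, rfl, rfl, rfl, rfl, hinf⟩ :=
    H g₁ g₂ h₁ h₂ hg₁ hg₂ hh₁ hh₂ h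
  exact ⟨(1, c₁₁), (1, c₁₂), (1, c₂₁), (1, c₂₂), lexLE_mk_mk_iff.mpr h₁₁,
    lexLE_mk_mk_iff.mpr h₁₂, lexLE_mk_mk_iff.mpr h₂₁, lexLE_mk_mk_iff.mpr h₂₂,
    Prod.ext (one_mul 1).symm rfl, Prod.ext (one_mul 1).symm rfl,
    Prod.ext (one_mul 1).symm rfl, Prod.ext (one_mul 1).symm rfl,
    forall_lexLE_mk_one_iff.mpr hinf⟩

section LexOfRDP2

variable {G₁ G₂ : Type*} [Group G₁] [PartialOrder G₁] [Group G₂] [PartialOrder G₂]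
  [MulLeftMono G₂] [MulRightMono G₂] [IsDirectedOrder G₂]

theorem RDP2With.lex_rdp2Decomposition_of_one_lt_right
    (H : RDP2With (· * ·) (1 : G₂) (· ≤ ·)) {x y : G₁} {g₁ g₂ h₁ h₂ : G₂}
    (hg₁ : lexLE 1 (x, g₁)) (hh₁ : lexLE 1 (x, h₁)) (hy : 1 < y) (h : g₁ * g₂ = h₁ * h₂) :
    RDP2Decomposition (· * ·) 1 lexLE (x, g₁) (y, g₂) (x, h₁) (y, h₂) := by
  obtain ⟨m, hmg, hmh, hm⟩ : ∃ m, m ≤ g₁ ∧ m ≤ h₁ ∧ lexLE 1 (x, m) := by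
    rcases hg₁ with hx | ⟨hx, hg₁⟩
    · obtain ⟨m, hmg, hmh⟩ := exists_le_le_of_isDirectedOrder g₁ h₁
      exact ⟨m, hmg, hmh, Or.inl hx⟩
    · obtain rfl : x = 1 := hx.symm
      exact ⟨1, hg₁, lexLE_mk_mk_iff.mp hh₁, lexLE_mk_mk_iff.mpr le_rfl⟩
  obtain ⟨w, q, r, hmw, hq, hr, hqr, rfl, rfl⟩ := H.exists_eq_mul_eq_mul_left hmg hmh
  have hh₂ : h₂ = q * (r⁻¹ * g₂) := by
    have hrq : Commute r⁻¹ q := (commute_of_lowerBounds_le_one hq hr hqr).symm.inv_left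
    have : r * h₂ = q * g₂ := mul_left_cancel (a := w) (by simpa only [mul_assoc] using h.symm)
    rw [eq_inv_mul_of_mul_eq this, ← mul_assoc, ← mul_assoc, hrq.eq]
  exact ⟨(x, w), (1, q), (1, r), (y, r⁻¹ * g₂), hm.mono_right hmw, lexLE_mk_mk_iff.mpr hq,
    lexLE_mk_mk_iff.mpr hr, Or.inl hy, Prod.ext (mul_one x).symm rfl,
    Prod.ext (one_mul y).symm (mul_inv_cancel_left r g₂).symm, Prod.ext (mul_one x).symm rfl,
    Prod.ext (one_mul y).symm hh₂, forall_lexLE_mk_one_iff.mpr hqr⟩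

theorem RDP2With.lex_rdp2Decomposition_of_one_lt_left
    (H : RDP2With (· * ·) (1 : G₂) (· ≤ ·)) {x : G₁} {g₁ g₂ h₁ h₂ : G₂}
    (hx : 1 < x) (hg₂ : 1 ≤ g₂) (hh₂ : 1 ≤ h₂) (h : g₁ * g₂ = h₁ * h₂) :
    RDP2Decomposition (· * ·) 1 lexLE (x, g₁) (1, g₂) (x, h₁) (1, h₂) := by
  obtain ⟨q, r, s, hq, hr, hqr, hs, rfl, rfl⟩ := H.exists_eq_mul_eq_mul_right hh₂ hg₂
  have hh₁ : h₁ = g₁ * q⁻¹ * r := by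
    have hqr' : Commute q⁻¹ r := (commute_of_lowerBounds_le_one hq hr hqr).inv_left
    have : h₁ * q = g₁ * r := mul_right_cancel (b := s) (by simpa only [mul_assoc] using h.symm)
    rw [eq_mul_inv_of_mul_eq this, mul_assoc, mul_assoc, hqr'.eq]
  exact ⟨(x, g₁ * q⁻¹), (1, q), (1, r), (1, s), Or.inl hx, lexLE_mk_mk_iff.mpr hq,
    lexLE_mk_mk_iff.mpr hr, lexLE_mk_mk_iff.mpr hs,
    Prod.ext (mul_one x).symm (inv_mul_cancel_right g₁ q).symm, Prod.ext (one_mul 1).symm rfl,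
    Prod.ext (mul_one x).symm hh₁, Prod.ext (one_mul 1).symm rfl,
    forall_lexLE_mk_one_iff.mpr hqr⟩

theorem RDP2With.lex_rdp2Decomposition_of_fst_eq
    (H : RDP2With (· * ·) (1 : G₂) (· ≤ ·)) {x y : G₁} {g₁ g₂ h₁ h₂ : G₂}
    (hg₁ : lexLE 1 (x, g₁)) (hg₂ : lexLE 1 (y, g₂)) (hh₁ : lexLE 1 (x, h₁))
    (hh₂ : lexLE 1 (y, h₂)) (h : g₁ * g₂ = h₁ * h₂) :
    RDP2Decomposition (· * ·) 1 lexLE (x, g₁) (y, g₂) (x, h₁) (y, h₂) := by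
  rcases hg₂ with hy | ⟨hy, hg₂⟩
  · exact H.lex_rdp2Decomposition_of_one_lt_right hg₁ hh₁ hy h
  obtain rfl : y = 1 := hy.symm
  rcases hg₁ with hx | ⟨hx, hg₁⟩
  · exact H.lex_rdp2Decomposition_of_one_lt_left hx hg₂ (lexLE_mk_mk_iff.mp hh₂) h
  obtain rfl : x = 1 := hx.symm
  exact H.lex_rdp2Decomposition_of_fst_eq_one hg₁ hg₂ (lexLE_mk_mk_iff.mp hh₁)
    (lexLE_mk_mk_iff.mp hh₂) h

end LexOfRDP2

theorem RDP2With.lex {G₁ G₂ : Type*} [Group G₁] [LinearOrder G₁] [MulLeftMono G₁]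
    [Group G₂] [PartialOrder G₂] [MulLeftMono G₂] [MulRightMono G₂] [IsDirectedOrder G₂]
    (H : RDP2With (· * ·) (1 : G₂) (· ≤ ·)) :
    RDP2With (· * ·) (1 : G₁ × G₂) lexLE := by
  suffices ∀ a₁ a₂ b₁ b₂ : G₁ × G₂, lexLE 1 a₁ → lexLE 1 a₂ → lexLE 1 b₁ → lexLE 1 b₂ →
      a₁ * a₂ = b₁ * b₂ → a₁.1 ≤ b₁.1 → RDP2Decomposition (· * ·) 1 lexLE a₁ a₂ b₁ b₂ from
    fun a₁ a₂ b₁ b₂ ha₁ ha₂ hb₁ hb₂ h => (le_total a₁.1 b₁.1).elim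
      (this a₁ a₂ b₁ b₂ ha₁ ha₂ hb₁ hb₂ h)
      fun hba => (this b₁ b₂ a₁ a₂ hb₁ hb₂ ha₁ ha₂ h.symm hba).symm
  rintro ⟨x, g₁⟩ ⟨y, g₂⟩ ⟨x', h₁⟩ ⟨y', h₂⟩ ha₁ ha₂ hb₁ hb₂ h hxx'
  rcases hxx'.lt_or_eq with hlt | rfl
  · exact lex_rdp2Decomposition_of_fst_lt ha₁ hb₂ h hlt
  simp only [Prod.mk_mul_mk, Prod.mk.injEq, mul_right_inj] at h
  obtain ⟨rfl, h⟩ := h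
  exact H.lex_rdp2Decomposition_of_fst_eq ha₁ ha₂ hb₁ hb₂ h

/-- For a linearly ordered group `G₁` and a directed po-group
`G₂`, the lexicographic product `G₁ ×lex G₂` satisfies RDP₂ iff `G₂` does. -/
theorem lex_rdp2_iff {G₁ G₂ : Type*} [Group G₁] [LinearOrder G₁]
    [CovariantClass G₁ G₁ (· * ·) (· ≤ ·)]
    [CovariantClass G₁ G₁ (Function.swap (· * ·)) (· ≤ ·)]
    [Group G₂] [PartialOrder G₂]
    [CovariantClass G₂ G₂ (· * ·) (· ≤ ·)]
    [CovariantClass G₂ G₂ (Function.swap (· * ·)) (· ≤ ·)]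
    (hdir : ∀ x y : G₂, ∃ z : G₂, x ≤ z ∧ y ≤ z) :
    RDP2With (fun p q : G₁ × G₂ => p * q) 1 lexLE ↔
      RDP2With (fun a b : G₂ => a * b) 1 (· ≤ ·) :=
  have : IsDirectedOrder G₂ := ⟨hdir⟩
  ⟨RDP2With.of_lex, RDP2With.lex⟩
end

section
/- Let G₁ be an antilattice po-group and G₂ a directed po-group. Then the lexicographic product G₁ ×lex G₂ satisfies RDP if and only if both G₁ and G₂ satisfy RDP. -/
section AuxLemmas

variable {G : Type*} [Group G] [PartialOrder G]
  [CovariantClass G G (· * ·) (· ≤ ·)]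
  [CovariantClass G G (Function.swap (· * ·)) (· ≤ ·)]

/-- Interpolation corner lemma: from RDP, if `t ≤ p, q` with `1 ≤ p, q`,
there is `m` with `1 ≤ m`, `t ≤ m`, `m ≤ p`, `m ≤ q`. -/
private lemma rdp_interp (H : RDPWith (fun a b : G => a * b) 1 (· ≤ ·))
    {t p q : G} (hp : 1 ≤ p) (hq : 1 ≤ q) (htp : t ≤ p) (htq : t ≤ q) :
    ∃ m : G, 1 ≤ m ∧ t ≤ m ∧ m ≤ p ∧ m ≤ q := by
  have h1 : (1 : G) ≤ t⁻¹ * p := by simpa using mul_le_mul_right htp t⁻¹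
  have h2 : (1 : G) ≤ p⁻¹ * q * p := by
    simpa using mul_le_mul_left (mul_le_mul_right hq p⁻¹) p
  have h3 : (1 : G) ≤ t⁻¹ * q := by simpa using mul_le_mul_right htq t⁻¹
  obtain ⟨r₁₁, r₁₂, r₂₁, r₂₂, hr₁, hr₂, hr₃, hr₄, E1, E2, E3, E4⟩ :=
    H (t⁻¹ * p) (p⁻¹ * q * p) (t⁻¹ * q) p h1 h2 h3 hp (by group)
  simp only [] at E1 E2 E3 E4
  have hr : r₁₁ = t⁻¹ * p * r₁₂⁻¹ := by rw [E1]; group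
  have hm : t * r₁₁ = p * r₁₂⁻¹ := by rw [hr]; group
  refine ⟨t * r₁₁, ?_, ?_, ?_, ?_⟩
  · rw [hm]
    have hle : r₁₂ ≤ p := by rw [E4]; exact le_mul_of_one_le_right' hr₄
    simpa using mul_le_mul_left hle r₁₂⁻¹
  · exact le_mul_of_one_le_right' hr₁
  · rw [hm]
    exact mul_le_of_le_one_right' (inv_le_one'.mpr hr₂)
  · have hq' : q = t * (r₁₁ * r₂₁) := by rw [← E3]; group
    rw [hq']
    exact mul_le_mul_right (le_mul_of_one_le_right' hr₃) t

/-- In an antilattice po-group with RDP, two positive elements either are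
comparable or have a common lower bound strictly above `1`. -/
private lemma exists_pos_lb (H : RDPWith (fun a b : G => a * b) 1 (· ≤ ·))
    (hanti : IsAntilattice G) {p q : G} (hp : 1 ≤ p) (hq : 1 ≤ q)
    (h1 : ¬ p ≤ q) (h2 : ¬ q ≤ p) :
    ∃ c : G, 1 ≤ c ∧ c ≤ p ∧ c ≤ q ∧ c ≠ 1 := by
  by_contra hcon
  push_neg at hcon
  have hglb : IsGLB ({p, q} : Set G) (1 : G) := by
    constructor
    · rintro r hr
      simp only [Set.mem_insert_iff, Set.mem_singleton_iff] at hr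
      rcases hr with rfl | rfl
      exacts [hp, hq]
    · intro t ht
      have htp : t ≤ p := ht (Set.mem_insert _ _)
      have htq : t ≤ q := ht (by simp)
      obtain ⟨m, hm1, hm2, hm3, hm4⟩ := rdp_interp H hp hq htp htq
      have := hcon m hm1 hm3 hm4
      rw [this] at hm2
      exact hm2
  rcases hanti p q (Or.inr ⟨1, hglb⟩) with h | h
  · exact h1 h
  · exact h2 h

/-- A "good" decomposition: one of the cross entries is `1`, or both diagonal
entries are non-`1`. Uses the antilattice property. -/
private lemma good_decomp (H : RDPWith (fun a b : G => a * b) 1 (· ≤ ·))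
    (hanti : IsAntilattice G) {a b c d : G}
    (ha : 1 ≤ a) (hb : 1 ≤ b) (hc : 1 ≤ c) (hd : 1 ≤ d) (hE : a * b = c * d) :
    ∃ E₁₁ E₁₂ E₂₁ E₂₂ : G, 1 ≤ E₁₁ ∧ 1 ≤ E₁₂ ∧ 1 ≤ E₂₁ ∧ 1 ≤ E₂₂ ∧
      a = E₁₁ * E₁₂ ∧ b = E₂₁ * E₂₂ ∧ c = E₁₁ * E₂₁ ∧ d = E₁₂ * E₂₂ ∧
      (E₁₂ = 1 ∨ E₂₁ = 1 ∨ (E₁₁ ≠ 1 ∧ E₂₂ ≠ 1)) := by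
  by_cases hac : c ≤ a
  · refine ⟨c, c⁻¹ * a, 1, b, hc, ?_, le_refl 1, hb, by group, by group, by group, ?_,
      Or.inr (Or.inl rfl)⟩
    · simpa using mul_le_mul_right hac c⁻¹
    · rw [mul_assoc, hE]; group
  by_cases hca : a ≤ c
  · refine ⟨a, 1, a⁻¹ * c, d, ha, le_refl 1, ?_, hd, by group, ?_, by group, by group,
      Or.inl rfl⟩
    · simpa using mul_le_mul_right hca a⁻¹
    · rw [mul_assoc, ← hE]; group
  by_cases hdb : d ≤ b
  · refine ⟨a, 1, b * d⁻¹, d, ha, le_refl 1, ?_, hd, by group, by group, ?_, by group,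
      Or.inl rfl⟩
    · simpa using mul_le_mul_left hdb d⁻¹
    · rw [← mul_assoc, hE]; group
  by_cases hbd : b ≤ d
  · refine ⟨c, d * b⁻¹, 1, b, hc, ?_, le_refl 1, hb, ?_, by group, by group, by group,
      Or.inr (Or.inl rfl)⟩
    · simpa using mul_le_mul_left hbd b⁻¹
    · rw [← mul_assoc, ← hE]; group
  obtain ⟨c₀, hc₀1, hc₀a, hc₀c, hc₀ne⟩ := exists_pos_lb H hanti ha hc hca hac
  obtain ⟨d₀, hd₀1, hd₀b, hd₀d, hd₀ne⟩ := exists_pos_lb H hanti hb hd hbd hdb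
  have p1 : (1 : G) ≤ c₀⁻¹ * a := by simpa using mul_le_mul_right hc₀a c₀⁻¹
  have p2 : (1 : G) ≤ b * d₀⁻¹ := by simpa using mul_le_mul_left hd₀b d₀⁻¹
  have p3 : (1 : G) ≤ c₀⁻¹ * c := by simpa using mul_le_mul_right hc₀c c₀⁻¹
  have p4 : (1 : G) ≤ d * d₀⁻¹ := by simpa using mul_le_mul_left hd₀d d₀⁻¹
  obtain ⟨h₁₁, h₁₂, h₂₁, h₂₂, k₁, k₂, k₃, k₄, F1, F2, F3, F4⟩ :=
    H (c₀⁻¹ * a) (b * d₀⁻¹) (c₀⁻¹ * c) (d * d₀⁻¹) p1 p2 p3 p4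
      (show (c₀⁻¹ * a) * (b * d₀⁻¹) = (c₀⁻¹ * c) * (d * d₀⁻¹) by
        rw [show (c₀⁻¹ * a) * (b * d₀⁻¹) = c₀⁻¹ * (a * b) * d₀⁻¹ by group, hE]; group)
  simp only [] at F1 F2 F3 F4
  refine ⟨c₀ * h₁₁, h₁₂, h₂₁, h₂₂ * d₀, one_le_mul hc₀1 k₁, k₂, k₃, one_le_mul k₄ hd₀1,
    ?_, ?_, ?_, ?_, Or.inr (Or.inr ⟨?_, ?_⟩)⟩
  · rw [mul_assoc, ← F1]; group
  · rw [← mul_assoc, ← F2]; group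
  · rw [mul_assoc, ← F3]; group
  · rw [← mul_assoc, ← F4]; group
  · intro h
    apply hc₀ne
    have h' : c₀ ≤ c₀ * h₁₁ := le_mul_of_one_le_right' k₁
    rw [h] at h'
    exact le_antisymm h' hc₀1
  · intro h
    apply hd₀ne
    have h' : d₀ ≤ h₂₂ * d₀ := le_mul_of_one_le_left' k₄
    rw [h] at h'
    exact le_antisymm h' hd₀1

/-- Commuting negative part: in a directed po-group with RDP, every `k` admits
`u ≤ 1` commuting with `k` such that `u⁻¹ * k ≥ 1`. -/
private lemma neg_part (H : RDPWith (fun a b : G => a * b) 1 (· ≤ ·))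
    (hdir : ∀ x y : G, ∃ z : G, x ≤ z ∧ y ≤ z) (k : G) :
    ∃ u : G, u * k = k * u ∧ u ≤ 1 ∧ 1 ≤ u⁻¹ * k := by
  obtain ⟨α, hα1, hαk⟩ := hdir 1 k
  obtain ⟨β, hβ1, hβk⟩ := hdir 1 k⁻¹
  have p1 : (1 : G) ≤ k⁻¹ * α := by simpa using mul_le_mul_right hαk k⁻¹
  have p2 : (1 : G) ≤ β * k := by simpa using mul_le_mul_left hβk k
  obtain ⟨c₁₁, c₁₂, c₂₁, c₂₂, k₁, k₂, k₃, k₄, E1, E2, E3, E4⟩ :=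
    H β α (β * k) (k⁻¹ * α) hβ1 hα1 p2 p1 (by group)
  simp only [] at E1 E2 E3 E4
  have hk1 : k = c₁₂⁻¹ * c₂₁ := by
    rw [show k = β⁻¹ * (β * k) by group, E3, E1]; group
  have hk2 : k = c₂₁ * c₁₂⁻¹ := by
    rw [show k = α * (k⁻¹ * α)⁻¹ by group, E4, E2]; group
  refine ⟨c₁₂⁻¹, ?_, inv_le_one'.mpr k₂, ?_⟩
  · conv_lhs => rw [hk2]
    conv_rhs => rw [hk1]
    group
  · rw [hk1]
    simpa using k₃

end AuxLemmas

section LexAux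

variable {G₁ G₂ : Type*} [Group G₁] [PartialOrder G₁] [Group G₂] [PartialOrder G₂]

private lemma lex_fst_le {p : G₁ × G₂} (h : lexLE 1 p) : 1 ≤ p.1 := by
  rcases h with h | ⟨h, _⟩
  · exact le_of_lt (by simpa using h)
  · exact le_of_eq (by simpa using h)

private lemma lex_snd_le {p : G₁ × G₂} (h : lexLE 1 p) (h1 : p.1 = 1) : 1 ≤ p.2 := by
  rcases h with h | ⟨_, h2⟩
  · exfalso
    rw [h1] at h
    simp at h
  · simpa using h2

private lemma lex_pos_mk_s3 {E : G₁} {f : G₂} (hE : 1 ≤ E) (hf : E = 1 → 1 ≤ f) :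
    lexLE (1 : G₁ × G₂) (E, f) := by
  rcases lt_or_eq_of_le hE with h | h
  · exact Or.inl (by simpa using h)
  · exact Or.inr ⟨by simpa using h, hf h.symm⟩

private lemma mk_sol {a b c d : G₁} {x y z w : G₂}
    (E₁₁ E₁₂ E₂₁ E₂₂ : G₁) (f₁₁ f₁₂ f₂₁ f₂₂ : G₂)
    (h₁ : 1 ≤ E₁₁) (h₂ : 1 ≤ E₁₂) (h₃ : 1 ≤ E₂₁) (h₄ : 1 ≤ E₂₂)
    (g₁ : E₁₁ = 1 → 1 ≤ f₁₁) (g₂ : E₁₂ = 1 → 1 ≤ f₁₂)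
    (g₃ : E₂₁ = 1 → 1 ≤ f₂₁) (g₄ : E₂₂ = 1 → 1 ≤ f₂₂)
    (e₁ : a = E₁₁ * E₁₂) (e₂ : b = E₂₁ * E₂₂) (e₃ : c = E₁₁ * E₂₁) (e₄ : d = E₁₂ * E₂₂)
    (q₁ : x = f₁₁ * f₁₂) (q₂ : y = f₂₁ * f₂₂) (q₃ : z = f₁₁ * f₂₁) (q₄ : w = f₁₂ * f₂₂) :
    ∃ c₁₁ c₁₂ c₂₁ c₂₂ : G₁ × G₂,
      lexLE 1 c₁₁ ∧ lexLE 1 c₁₂ ∧ lexLE 1 c₂₁ ∧ lexLE 1 c₂₂ ∧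
      (a, x) = c₁₁ * c₁₂ ∧ (b, y) = c₂₁ * c₂₂ ∧ (c, z) = c₁₁ * c₂₁ ∧ (d, w) = c₁₂ * c₂₂ := by
  refine ⟨(E₁₁, f₁₁), (E₁₂, f₁₂), (E₂₁, f₂₁), (E₂₂, f₂₂),
    lex_pos_mk_s3 h₁ g₁, lex_pos_mk_s3 h₂ g₂, lex_pos_mk_s3 h₃ g₃, lex_pos_mk_s3 h₄ g₄, ?_, ?_, ?_, ?_⟩
  all_goals rw [Prod.mk_mul_mk, Prod.mk.injEq]
  exacts [⟨e₁, q₁⟩, ⟨e₂, q₂⟩, ⟨e₃, q₃⟩, ⟨e₄, q₄⟩]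

end LexAux

/-- For an antilattice po-group `G₁` and a directed po-group
`G₂`, the lexicographic product `G₁ ×lex G₂` satisfies RDP iff both `G₁` and
`G₂` satisfy RDP. -/
theorem lex_rdp_iff_of_antilattice {G₁ G₂ : Type*} [Group G₁] [PartialOrder G₁]
    [CovariantClass G₁ G₁ (· * ·) (· ≤ ·)]
    [CovariantClass G₁ G₁ (Function.swap (· * ·)) (· ≤ ·)]
    [Group G₂] [PartialOrder G₂]
    [CovariantClass G₂ G₂ (· * ·) (· ≤ ·)]
    [CovariantClass G₂ G₂ (Function.swap (· * ·)) (· ≤ ·)]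
    (hanti : IsAntilattice G₁)
    (hdir : ∀ x y : G₂, ∃ z : G₂, x ≤ z ∧ y ≤ z) :
    RDPWith (fun p q : G₁ × G₂ => p * q) 1 lexLE ↔
      (RDPWith (fun a b : G₁ => a * b) 1 (· ≤ ·) ∧
        RDPWith (fun a b : G₂ => a * b) 1 (· ≤ ·)) := by
  constructor
  · intro H
    constructor
    · intro a₁ a₂ b₁ b₂ h₁ h₂ h₃ h₄ he
      have he' : a₁ * a₂ = b₁ * b₂ := he
      obtain ⟨c₁₁, c₁₂, c₂₁, c₂₂, k₁, k₂, k₃, k₄, m₁, m₂, m₃, m₄⟩ :=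
        H (a₁, 1) (a₂, 1) (b₁, 1) (b₂, 1)
          (lex_pos_mk_s3 h₁ fun _ => le_refl 1) (lex_pos_mk_s3 h₂ fun _ => le_refl 1)
          (lex_pos_mk_s3 h₃ fun _ => le_refl 1) (lex_pos_mk_s3 h₄ fun _ => le_refl 1)
          (show ((a₁ : G₁), (1 : G₂)) * (a₂, 1) = ((b₁ : G₁), (1 : G₂)) * (b₂, 1) by
            rw [Prod.mk_mul_mk, Prod.mk_mul_mk, he'])
      exact ⟨c₁₁.1, c₁₂.1, c₂₁.1, c₂₂.1, lex_fst_le k₁, lex_fst_le k₂, lex_fst_le k₃,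
        lex_fst_le k₄, by simpa using congrArg Prod.fst m₁,
        by simpa using congrArg Prod.fst m₂, by simpa using congrArg Prod.fst m₃,
        by simpa using congrArg Prod.fst m₄⟩
    · intro x₁ x₂ y₁ y₂ h₁ h₂ h₃ h₄ he
      have he' : x₁ * x₂ = y₁ * y₂ := he
      obtain ⟨c₁₁, c₁₂, c₂₁, c₂₂, k₁, k₂, k₃, k₄, m₁, m₂, m₃, m₄⟩ :=
        H (1, x₁) (1, x₂) (1, y₁) (1, y₂)
          (lex_pos_mk_s3 (le_refl 1) fun _ => h₁) (lex_pos_mk_s3 (le_refl 1) fun _ => h₂)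
          (lex_pos_mk_s3 (le_refl 1) fun _ => h₃) (lex_pos_mk_s3 (le_refl 1) fun _ => h₄)
          (show ((1 : G₁), x₁) * (1, x₂) = ((1 : G₁), y₁) * (1, y₂) by
            rw [Prod.mk_mul_mk, Prod.mk_mul_mk, he'])
      have n₁ : c₁₁.1 * c₁₂.1 = 1 := by simpa using (congrArg Prod.fst m₁).symm
      have n₂ : c₂₁.1 * c₂₂.1 = 1 := by simpa using (congrArg Prod.fst m₂).symm
      have o₁ : c₁₁.1 = 1 := by
        have h' : c₁₁.1 ≤ c₁₁.1 * c₁₂.1 := le_mul_of_one_le_right' (lex_fst_le k₂)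
        rw [n₁] at h'
        exact le_antisymm h' (lex_fst_le k₁)
      have o₂ : c₁₂.1 = 1 := by
        have h' : c₁₂.1 ≤ c₁₁.1 * c₁₂.1 := le_mul_of_one_le_left' (lex_fst_le k₁)
        rw [n₁] at h'
        exact le_antisymm h' (lex_fst_le k₂)
      have o₃ : c₂₁.1 = 1 := by
        have h' : c₂₁.1 ≤ c₂₁.1 * c₂₂.1 := le_mul_of_one_le_right' (lex_fst_le k₄)
        rw [n₂] at h'
        exact le_antisymm h' (lex_fst_le k₃)
      have o₄ : c₂₂.1 = 1 := by
        have h' : c₂₂.1 ≤ c₂₁.1 * c₂₂.1 := le_mul_of_one_le_left' (lex_fst_le k₃)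
        rw [n₂] at h'
        exact le_antisymm h' (lex_fst_le k₄)
      exact ⟨c₁₁.2, c₁₂.2, c₂₁.2, c₂₂.2, lex_snd_le k₁ o₁, lex_snd_le k₂ o₂,
        lex_snd_le k₃ o₃, lex_snd_le k₄ o₄, by simpa using congrArg Prod.snd m₁,
        by simpa using congrArg Prod.snd m₂, by simpa using congrArg Prod.snd m₃,
        by simpa using congrArg Prod.snd m₄⟩
  · rintro ⟨H₁, H₂⟩
    intro p₁ p₂ q₁ q₂ hp₁ hp₂ hq₁ hq₂ heq
    obtain ⟨a, x⟩ := p₁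
    obtain ⟨b, y⟩ := p₂
    obtain ⟨c, z⟩ := q₁
    obtain ⟨d, w⟩ := q₂
    have heq' : (a, x) * (b, y) = (c, z) * (d, w) := heq
    have hab : a * b = c * d := by simpa using congrArg Prod.fst heq'
    have hxy : x * y = z * w := by simpa using congrArg Prod.snd heq'
    have ha : (1 : G₁) ≤ a := lex_fst_le hp₁
    have hb : (1 : G₁) ≤ b := lex_fst_le hp₂
    have hc : (1 : G₁) ≤ c := lex_fst_le hq₁
    have hd : (1 : G₁) ≤ d := lex_fst_le hq₂
    obtain ⟨E₁₁, E₁₂, E₂₁, E₂₂, u₁, u₂, u₃, u₄, eE₁, eE₂, eE₃, eE₄, hgood⟩ :=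
      good_decomp H₁ hanti ha hb hc hd hab
    by_cases h12 : E₁₂ = 1
    · by_cases h21 : E₂₁ = 1
      · by_cases h11 : E₁₁ = 1
        · have ha1 : a = 1 := by rw [eE₁, h11, h12, one_mul]
          have hc1 : c = 1 := by rw [eE₃, h11, h21, one_mul]
          have hx : (1 : G₂) ≤ x := lex_snd_le hp₁ ha1
          have hz : (1 : G₂) ≤ z := lex_snd_le hq₁ hc1
          by_cases h22 : E₂₂ = 1
          · have hb1 : b = 1 := by rw [eE₂, h21, h22, one_mul]
            have hd1 : d = 1 := by rw [eE₄, h12, h22, one_mul]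
            have hy : (1 : G₂) ≤ y := lex_snd_le hp₂ hb1
            have hw : (1 : G₂) ≤ w := lex_snd_le hq₂ hd1
            obtain ⟨f₁₁, f₁₂, f₂₁, f₂₂, l₁, l₂, l₃, l₄, m₁, m₂, m₃, m₄⟩ :=
              H₂ x y z w hx hy hz hw hxy
            exact mk_sol E₁₁ E₁₂ E₂₁ E₂₂ f₁₁ f₁₂ f₂₁ f₂₂ u₁ u₂ u₃ u₄
              (fun _ => l₁) (fun _ => l₂) (fun _ => l₃) (fun _ => l₄)
              eE₁ eE₂ eE₃ eE₄ m₁ m₂ m₃ m₄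
          · obtain ⟨s, hs₁, hs₂⟩ := hdir y⁻¹ w⁻¹
            have hys : (1 : G₂) ≤ y * s := by simpa using mul_le_mul_right hs₁ y
            have hws : (1 : G₂) ≤ w * s := by simpa using mul_le_mul_right hs₂ w
            obtain ⟨g₁₁, g₁₂, g₂₁, g₂₂, l₁, l₂, l₃, l₄, m₁, m₂, m₃, m₄⟩ :=
              H₂ x (y * s) z (w * s) hx hys hz hws
                (show x * (y * s) = z * (w * s) by rw [← mul_assoc, ← mul_assoc, hxy])
            have m₂' : y * s = g₂₁ * g₂₂ := m₂
            have m₄' : w * s = g₁₂ * g₂₂ := m₄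
            refine mk_sol E₁₁ E₁₂ E₂₁ E₂₂ g₁₁ g₁₂ g₂₁ (g₂₂ * s⁻¹) u₁ u₂ u₃ u₄
              (fun _ => l₁) (fun _ => l₂) (fun _ => l₃) (fun h => absurd h h22)
              eE₁ eE₂ eE₃ eE₄ m₁ ?_ m₃ ?_
            · rw [show y = (y * s) * s⁻¹ by group, m₂']; group
            · rw [show w = (w * s) * s⁻¹ by group, m₄']; group
        · by_cases h22 : E₂₂ = 1
          · have hb1 : b = 1 := by rw [eE₂, h21, h22, one_mul]
            have hd1 : d = 1 := by rw [eE₄, h12, h22, one_mul]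
            have hy : (1 : G₂) ≤ y := lex_snd_le hp₂ hb1
            have hw : (1 : G₂) ≤ w := lex_snd_le hq₂ hd1
            obtain ⟨s, hs₁, hs₂⟩ := hdir x⁻¹ z⁻¹
            have hsx : (1 : G₂) ≤ s * x := by simpa using mul_le_mul_left hs₁ x
            have hsz : (1 : G₂) ≤ s * z := by simpa using mul_le_mul_left hs₂ z
            obtain ⟨g₁₁, g₁₂, g₂₁, g₂₂, l₁, l₂, l₃, l₄, m₁, m₂, m₃, m₄⟩ :=
              H₂ (s * x) y (s * z) w hsx hy hsz hw
                (show (s * x) * y = (s * z) * w by rw [mul_assoc, mul_assoc, hxy])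
            have m₁' : s * x = g₁₁ * g₁₂ := m₁
            have m₃' : s * z = g₁₁ * g₂₁ := m₃
            refine mk_sol E₁₁ E₁₂ E₂₁ E₂₂ (s⁻¹ * g₁₁) g₁₂ g₂₁ g₂₂ u₁ u₂ u₃ u₄
              (fun h => absurd h h11) (fun _ => l₂) (fun _ => l₃) (fun _ => l₄)
              eE₁ eE₂ eE₃ eE₄ ?_ m₂ ?_ m₄
            · rw [show x = s⁻¹ * (s * x) by group, m₁']; group
            · rw [show z = s⁻¹ * (s * z) by group, m₃']; group
          · obtain ⟨u, hu, hu1, hu2⟩ := neg_part H₂ hdir (z⁻¹ * x)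
            refine mk_sol E₁₁ E₁₂ E₂₁ E₂₂ (z * u) (u⁻¹ * (z⁻¹ * x)) u⁻¹ (u * y)
              u₁ u₂ u₃ u₄ (fun h => absurd h h11) (fun _ => hu2)
              (fun _ => one_le_inv'.mpr hu1) (fun h => absurd h h22)
              eE₁ eE₂ eE₃ eE₄ (by group) (by group) (by group) ?_
            have h5 : (u⁻¹ * (z⁻¹ * x)) * (u * y) = z⁻¹ * (x * y) := by
              rw [show (u⁻¹ * (z⁻¹ * x)) * (u * y) = u⁻¹ * ((z⁻¹ * x) * u) * y by group,
                ← hu]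
              group
            rw [h5, hxy]
            group
      · refine mk_sol E₁₁ E₁₂ E₂₁ E₂₂ x 1 (x⁻¹ * z) w u₁ u₂ u₃ u₄
          (fun h => lex_snd_le hp₁ (show a = 1 by rw [eE₁, h, h12, one_mul]))
          (fun _ => le_refl 1) (fun h => absurd h h21)
          (fun h => lex_snd_le hq₂ (show d = 1 by rw [eE₄, h12, h, one_mul]))
          eE₁ eE₂ eE₃ eE₄ (by group) ?_ (by group) (by group)
        rw [mul_assoc, ← hxy]; group
    · by_cases h21 : E₂₁ = 1
      · refine mk_sol E₁₁ E₁₂ E₂₁ E₂₂ z (z⁻¹ * x) 1 y u₁ u₂ u₃ u₄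
          (fun h => lex_snd_le hq₁ (show c = 1 by rw [eE₃, h, h21, one_mul]))
          (fun h => absurd h h12) (fun _ => le_refl 1)
          (fun h => lex_snd_le hp₂ (show b = 1 by rw [eE₂, h21, h, one_mul]))
          eE₁ eE₂ eE₃ eE₄ (by group) (by group) (by group) ?_
        rw [mul_assoc, hxy]; group
      · rcases hgood with h | h | ⟨hn1, hn2⟩
        · exact absurd h h12
        · exact absurd h h21
        · refine mk_sol E₁₁ E₁₂ E₂₁ E₂₂ x 1 (x⁻¹ * z) w u₁ u₂ u₃ u₄
            (fun h => absurd h hn1) (fun _ => le_refl 1) (fun h => absurd h h21)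
            (fun h => absurd h hn2)
            eE₁ eE₂ eE₃ eE₄ (by group) ?_ (by group) (by group)
          rw [mul_assoc, ← hxy]; group
end

section
/- Let G be an antilattice po-group satisfying RDP, and let n₁, n₂, m₁, m₂ be strictly positive elements of G with n₁·n₂ = m₁·m₂ such that n₁ and m₁ are not comparable. Then there exist strictly positive elements n₁₁, n₁₂, n₂₁, n₂₂ of G with n₁ = n₁₁·n₁₂, n₂ = n₂₁·n₂₂, m₁ = n₁₁·n₂₁, and m₂ = n₁₂·n₂₂. -/
/-- RDP implies RDP₀ : a positive element below a product of two positive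
elements splits accordingly. -/
lemma rdp_zero {G : Type*} [Group G] [PartialOrder G]
    [CovariantClass G G (· * ·) (· ≤ ·)]
    [CovariantClass G G (Function.swap (· * ·)) (· ≤ ·)]
    (hrdp : RDPWith (fun a b : G => a * b) 1 (· ≤ ·))
    {a b₁ b₂ : G} (ha : 1 ≤ a) (hb₁ : 1 ≤ b₁) (hb₂ : 1 ≤ b₂)
    (hab : a ≤ b₁ * b₂) :
    ∃ x y : G, 1 ≤ x ∧ 1 ≤ y ∧ x ≤ b₁ ∧ y ≤ b₂ ∧ a = x * y := by
  have h2 : (1 : G) ≤ a⁻¹ * (b₁ * b₂) := by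
    have := mul_le_mul_right hab a⁻¹
    rwa [inv_mul_cancel] at this
  obtain ⟨c₁₁, c₁₂, c₂₁, c₂₂, h11, h12, h21, h22, e1, e2, e3, e4⟩ :=
    hrdp a (a⁻¹ * (b₁ * b₂)) b₁ b₂ ha h2 hb₁ hb₂ (by group)
  simp only at e1 e2 e3 e4
  refine ⟨c₁₁, c₁₂, h11, h12, ?_, ?_, e1⟩
  · rw [e3]; exact le_mul_of_one_le_right' h21
  · rw [e4]; exact le_mul_of_one_le_right' h22

/-- A special case of the Riesz interpolation property derived from RDP. -/
lemma rdp_interp_s5 {G : Type*} [Group G] [PartialOrder G]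
    [CovariantClass G G (· * ·) (· ≤ ·)]
    [CovariantClass G G (Function.swap (· * ·)) (· ≤ ·)]
    (hrdp : RDPWith (fun a b : G => a * b) 1 (· ≤ ·))
    {z b₁ b₂ : G} (hz1 : z ≤ b₁) (hz2 : z ≤ b₂) (h1 : 1 ≤ b₁) (h2 : 1 ≤ b₂) :
    ∃ c : G, z ≤ c ∧ 1 ≤ c ∧ c ≤ b₁ ∧ c ≤ b₂ := by
  have hz2' : (1 : G) ≤ z⁻¹ * b₂ := by
    have := mul_le_mul_right hz2 z⁻¹; rwa [inv_mul_cancel] at this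
  have hkey : b₂ ≤ b₁ * (z⁻¹ * b₂) := by
    have hb1z : b₁⁻¹ * z ≤ 1 := by
      have := mul_le_mul_right hz1 b₁⁻¹; rwa [inv_mul_cancel] at this
    have : (b₁⁻¹ * z) * (z⁻¹ * b₂) ≤ 1 * (z⁻¹ * b₂) := mul_le_mul_left hb1z _
    have := mul_le_mul_right this b₁
    calc b₂ = b₁ * ((b₁⁻¹ * z) * (z⁻¹ * b₂)) := by group
    _ ≤ b₁ * (1 * (z⁻¹ * b₂)) := this
    _ = b₁ * (z⁻¹ * b₂) := by rw [one_mul]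
  obtain ⟨x, y, hx1, hy1, hxb, hyb, hxy⟩ := rdp_zero hrdp h2 h1 hz2' hkey
  have hxeq : x = b₂ * y⁻¹ := by rw [hxy]; group
  refine ⟨x, ?_, hx1, hxb, ?_⟩
  · have : (z⁻¹ * b₂)⁻¹ ≤ y⁻¹ := inv_le_inv_iff.mpr hyb
    have := mul_le_mul_right this b₂
    calc z = b₂ * (z⁻¹ * b₂)⁻¹ := by group
    _ ≤ b₂ * y⁻¹ := this
    _ = x := hxeq.symm
  · rw [hxeq]
    calc b₂ * y⁻¹ ≤ b₂ * 1 := mul_le_mul_right (inv_le_one'.mpr hy1) b₂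
    _ = b₂ := mul_one b₂

/-- In an antilattice, two incomparable elements above `1` admit a common
lower bound not below `1`. -/
lemma antilattice_lower {G : Type*} [Group G] [PartialOrder G]
    (hanti : IsAntilattice G) {b₁ b₂ : G} (h1 : 1 ≤ b₁) (h2 : 1 ≤ b₂)
    (hnc₁ : ¬ b₁ ≤ b₂) (hnc₂ : ¬ b₂ ≤ b₁) :
    ∃ z : G, z ≤ b₁ ∧ z ≤ b₂ ∧ ¬ z ≤ 1 := by
  by_contra h
  push_neg at h
  have hglb : IsGLB {b₁, b₂} (1 : G) := by
    constructor
    · intro x hx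
      rcases hx with hx | hx
      · rw [hx]; exact h1
      · rw [Set.mem_singleton_iff] at hx; rw [hx]; exact h2
    · intro z hz
      exact h z (hz (Set.mem_insert _ _)) (hz (Set.mem_insert_of_mem _ rfl))
  exact (hanti b₁ b₂ (Or.inr ⟨1, hglb⟩)).elim hnc₁ hnc₂

/-- In an antilattice po-group with RDP, whenever
`n₁·n₂ = m₁·m₂` with all four elements strictly positive and `n₁`, `m₁`
incomparable, there is an RDP decomposition with all four entries strictly
positive. -/
theorem antilattice_rdp_strictly_positive_decomposition {G : Type*} [Group G]
    [PartialOrder G]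
    [CovariantClass G G (· * ·) (· ≤ ·)]
    [CovariantClass G G (Function.swap (· * ·)) (· ≤ ·)]
    (hanti : IsAntilattice G)
    (hrdp : RDPWith (fun a b : G => a * b) 1 (· ≤ ·))
    (n₁ n₂ m₁ m₂ : G) (hn₁ : 1 < n₁) (hn₂ : 1 < n₂) (hm₁ : 1 < m₁)
    (hm₂ : 1 < m₂) (heq : n₁ * n₂ = m₁ * m₂)
    (hnc₁ : ¬ n₁ ≤ m₁) (hnc₂ : ¬ m₁ ≤ n₁) :
    ∃ n₁₁ n₁₂ n₂₁ n₂₂ : G, 1 < n₁₁ ∧ 1 < n₁₂ ∧ 1 < n₂₁ ∧ 1 < n₂₂ ∧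
      n₁ = n₁₁ * n₁₂ ∧ n₂ = n₂₁ * n₂₂ ∧ m₁ = n₁₁ * n₂₁ ∧ m₂ = n₁₂ * n₂₂ := by
  -- strictly positive common lower bound of n₁, m₁
  obtain ⟨z, hz1, hz2, hznot⟩ := antilattice_lower hanti hn₁.le hm₁.le hnc₁ hnc₂
  obtain ⟨c, hzc, hc1, hcn, hcm⟩ := rdp_interp_s5 hrdp hz1 hz2 hn₁.le hm₁.le
  have hc : 1 < c := hc1.lt_of_ne (fun h => hznot (h ▸ hzc))
  -- n₂ and m₂ are incomparable
  have hnc₁' : ¬ n₂ ≤ m₂ := by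
    intro h
    apply hnc₂
    have h' : n₂ * m₂⁻¹ ≤ 1 := by
      have := mul_le_mul_left h m₂⁻¹; rwa [mul_inv_cancel] at this
    have : n₁ * (n₂ * m₂⁻¹) ≤ n₁ * 1 := mul_le_mul_right h' n₁
    calc m₁ = n₁ * (n₂ * m₂⁻¹) := by rw [show n₁ * (n₂ * m₂⁻¹) = n₁ * n₂ * m₂⁻¹ by group, heq]; group
    _ ≤ n₁ * 1 := this
    _ = n₁ := mul_one n₁
  have hnc₂' : ¬ m₂ ≤ n₂ := by
    intro h
    apply hnc₁
    have h' : m₂ * n₂⁻¹ ≤ 1 := by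
      have := mul_le_mul_left h n₂⁻¹; rwa [mul_inv_cancel] at this
    have : m₁ * (m₂ * n₂⁻¹) ≤ m₁ * 1 := mul_le_mul_right h' m₁
    calc n₁ = m₁ * (m₂ * n₂⁻¹) := by rw [show m₁ * (m₂ * n₂⁻¹) = m₁ * m₂ * n₂⁻¹ by group, ← heq]; group
    _ ≤ m₁ * 1 := this
    _ = m₁ := mul_one m₁
  -- strictly positive common lower bound of n₂, m₂
  obtain ⟨w, hw1, hw2, hwnot⟩ := antilattice_lower hanti hn₂.le hm₂.le hnc₁' hnc₂'
  obtain ⟨d, hwd, hd1, hdn, hdm⟩ := rdp_interp_s5 hrdp hw1 hw2 hn₂.le hm₂.le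
  have hd : 1 < d := hd1.lt_of_ne (fun h => hwnot (h ▸ hwd))
  -- positivity of the shifted factors
  have ha₁ : (1 : G) ≤ c⁻¹ * n₁ := by
    have := mul_le_mul_right hcn c⁻¹; rwa [inv_mul_cancel] at this
  have hb₁ : (1 : G) ≤ c⁻¹ * m₁ := by
    have := mul_le_mul_right hcm c⁻¹; rwa [inv_mul_cancel] at this
  have ha₂ : (1 : G) ≤ n₂ * d⁻¹ := by
    have := mul_le_mul_left hdn d⁻¹; rwa [mul_inv_cancel] at this
  have hb₂ : (1 : G) ≤ m₂ * d⁻¹ := by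
    have := mul_le_mul_left hdm d⁻¹; rwa [mul_inv_cancel] at this
  have hkey : (c⁻¹ * n₁) * (n₂ * d⁻¹) = (c⁻¹ * m₁) * (m₂ * d⁻¹) := by
    rw [show (c⁻¹ * n₁) * (n₂ * d⁻¹) = c⁻¹ * (n₁ * n₂) * d⁻¹ by group, heq]; group
  obtain ⟨e₁₁, e₁₂, e₂₁, e₂₂, h11, h12, h21, h22, e1, e2, e3, e4⟩ :=
    hrdp (c⁻¹ * n₁) (n₂ * d⁻¹) (c⁻¹ * m₁) (m₂ * d⁻¹) ha₁ ha₂ hb₁ hb₂ hkey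
  simp only at e1 e2 e3 e4
  have hn1eq : n₁ = (c * e₁₁) * e₁₂ := by
    rw [show (c * e₁₁) * e₁₂ = c * (e₁₁ * e₁₂) by group, ← e1]; group
  have hm1eq : m₁ = (c * e₁₁) * e₂₁ := by
    rw [show (c * e₁₁) * e₂₁ = c * (e₁₁ * e₂₁) by group, ← e3]; group
  have hn2eq : n₂ = e₂₁ * (e₂₂ * d) := by
    rw [show e₂₁ * (e₂₂ * d) = (e₂₁ * e₂₂) * d by group, ← e2]; group
  have hm2eq : m₂ = e₁₂ * (e₂₂ * d) := by
    rw [show e₁₂ * (e₂₂ * d) = (e₁₂ * e₂₂) * d by group, ← e4]; group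
  have he₁₂ : 1 < e₁₂ := by
    rcases h12.lt_or_eq with h | h
    · exact h
    · exfalso
      apply hnc₁
      rw [hn1eq, hm1eq, ← h]
      calc (c * e₁₁) * 1 = c * e₁₁ := mul_one _
      _ ≤ (c * e₁₁) * e₂₁ := le_mul_of_one_le_right' h21
  have he₂₁ : 1 < e₂₁ := by
    rcases h21.lt_or_eq with h | h
    · exact h
    · exfalso
      apply hnc₂
      rw [hn1eq, hm1eq, ← h]
      calc (c * e₁₁) * 1 = c * e₁₁ := mul_one _
      _ ≤ (c * e₁₁) * e₁₂ := le_mul_of_one_le_right' h12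
  refine ⟨c * e₁₁, e₁₂, e₂₁, e₂₂ * d, ?_, he₁₂, he₂₁, ?_, hn1eq, hn2eq, hm1eq, hm2eq⟩
  · exact hc.trans_le (le_mul_of_one_le_right' h11)
  · exact hd.trans_le (le_mul_of_one_le_left' h22)
end

section
/- Let A be a linearly ordered group and G a directed po-group. Then the unrestricted Wreath product A Wr G satisfies RDP₁ if and only if G satisfies RDP₁. -/
private lemma wreathRDP1_key {G : Type*} [Group G] [PartialOrder G]
    [CovariantClass G G (· * ·) (· ≤ ·)]
    [CovariantClass G G (Function.swap (· * ·)) (· ≤ ·)]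
    (hG : RDP1With (fun a b : G => a * b) 1 (· ≤ ·))
    (α β γ δ w₁ w₂ : G) (heq : α * β = γ * δ)
    (h1 : 1 ≤ w₁ * α) (h2 : 1 ≤ w₁ * γ) (h3 : 1 ≤ β * w₂) (h4 : 1 ≤ δ * w₂) :
    ∃ k P Q R : G, 1 ≤ w₁ * k ∧ 1 ≤ P ∧ 1 ≤ Q ∧ 1 ≤ R * w₂ ∧
      α = k * P ∧ β = Q * R ∧ γ = k * Q ∧ δ = P * R ∧
      ∀ x y : G, 1 ≤ x → x ≤ P → 1 ≤ y → y ≤ Q → x * y = y * x := by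
  obtain ⟨d11, d12, d21, d22, q11, q12, q21, q22, E1, E2, E3, E4, hc⟩ :=
    hG (w₁ * α) (β * w₂) (w₁ * γ) (δ * w₂) h1 h3 h2 h4
      (show (w₁ * α) * (β * w₂) = (w₁ * γ) * (δ * w₂) by
        rw [mul_assoc, ← mul_assoc α, heq, mul_assoc, mul_assoc])
  simp only [] at E1 E2 E3 E4 hc
  refine ⟨w₁⁻¹ * d11, d12, d21, d22 * w₂⁻¹, ?_, q12, q21, ?_, ?_, ?_, ?_, ?_, hc⟩
  · rwa [mul_inv_cancel_left]
  · rwa [inv_mul_cancel_right]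
  · rw [mul_assoc, ← E1, inv_mul_cancel_left]
  · rw [← mul_assoc, ← E2, mul_inv_cancel_right]
  · rw [mul_assoc, ← E3, inv_mul_cancel_left]
  · rw [← mul_assoc, ← E4, mul_inv_cancel_right]


private lemma wreathRDP1_fwd {A G : Type*} [Group A] [LinearOrder A]
    [CovariantClass A A (· * ·) (· ≤ ·)]
    [CovariantClass A A (Function.swap (· * ·)) (· ≤ ·)]
    [Group G] [PartialOrder G]
    [CovariantClass G G (· * ·) (· ≤ ·)]
    [CovariantClass G G (Function.swap (· * ·)) (· ≤ ·)]
    (hW : RDP1With (fun p q : A × (A → G) => wrMul p q) (wrOne A G) wrLE) :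
    RDP1With (fun a b : G => a * b) 1 (· ≤ ·) := by
  intro g₁ g₂ k₁ k₂ hg₁ hg₂ hk₁ hk₂ heq
  have pos : ∀ g : G, 1 ≤ g → wrLE (wrOne A G) ((1 : A), fun _ => g) :=
    fun g hg => Or.inr ⟨rfl, fun _ => hg⟩
  obtain ⟨C₁₁, C₁₂, C₂₁, C₂₂, p11, p12, p21, p22, e1, e2, e3, e4, hcm⟩ :=
    hW ((1 : A), fun _ => g₁) ((1 : A), fun _ => g₂) ((1 : A), fun _ => k₁)
      ((1 : A), fun _ => k₂) (pos _ hg₁) (pos _ hg₂) (pos _ hk₁) (pos _ hk₂)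
      (by simp only [wrMul, heq])
  simp only [] at e1 e2 e3 e4 hcm
  -- all first components are ≥ 1
  have ge1 : ∀ C : A × (A → G), wrLE (wrOne A G) C → 1 ≤ C.1 := by
    rintro C (h | ⟨h, -⟩)
    · exact le_of_lt h
    · exact le_of_eq h
  -- from products = 1, all first components are 1
  have ones : ∀ x y : A, 1 ≤ x → 1 ≤ y → x * y = 1 → x = 1 ∧ y = 1 := by
    intro x y hx hy hxy
    have : y ≤ 1 := hxy ▸ le_mul_of_one_le_left' hx
    have hy1 : y = 1 := le_antisymm this hy
    refine ⟨?_, hy1⟩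
    rw [hy1, mul_one] at hxy; exact hxy
  have f1 : (1 : A) = C₁₁.1 * C₁₂.1 := congrArg Prod.fst e1
  have f2 : (1 : A) = C₂₁.1 * C₂₂.1 := congrArg Prod.fst e2
  obtain ⟨h11, h12⟩ := ones _ _ (ge1 _ p11) (ge1 _ p12) f1.symm
  obtain ⟨h21, h22⟩ := ones _ _ (ge1 _ p21) (ge1 _ p22) f2.symm
  -- function parts are ≥ 1
  have fpos : ∀ C : A × (A → G), wrLE (wrOne A G) C → C.1 = 1 → ∀ a, 1 ≤ C.2 a := by
    rintro C (h | ⟨-, h⟩) hC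
    · rw [hC] at h; exact absurd h (lt_irrefl 1)
    · exact h
  have q12 := fpos _ p12 h12
  have q21 := fpos _ p21 h21
  -- second components at point 1
  have s1 : g₁ = C₁₁.2 1 * C₁₂.2 1 := by
    have := congrFun (congrArg Prod.snd e1) 1
    simp only [wrMul] at this
    rwa [h11, mul_one] at this
  have s2 : g₂ = C₂₁.2 1 * C₂₂.2 1 := by
    have := congrFun (congrArg Prod.snd e2) 1
    simp only [wrMul] at this
    rwa [h21, mul_one] at this
  have s3 : k₁ = C₁₁.2 1 * C₂₁.2 1 := by
    have := congrFun (congrArg Prod.snd e3) 1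
    simp only [wrMul] at this
    rwa [h11, mul_one] at this
  have s4 : k₂ = C₁₂.2 1 * C₂₂.2 1 := by
    have := congrFun (congrArg Prod.snd e4) 1
    simp only [wrMul] at this
    rwa [h12, mul_one] at this
  refine ⟨C₁₁.2 1, C₁₂.2 1, C₂₁.2 1, C₂₂.2 1,
    fpos _ p11 h11 1, q12 1, q21 1, fpos _ p22 h22 1, s1, s2, s3, s4, ?_⟩
  intro x y hx hxc hy hyc
  set X : A × (A → G) := ((1 : A), fun a => if a = 1 then x else 1) with hX
  set Y : A × (A → G) := ((1 : A), fun a => if a = 1 then y else 1) with hY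
  have hXpos : wrLE (wrOne A G) X := by
    refine Or.inr ⟨rfl, fun a => ?_⟩
    by_cases h : a = 1 <;> simp [X, wrOne, h]
    exact hx
  have hYpos : wrLE (wrOne A G) Y := by
    refine Or.inr ⟨rfl, fun a => ?_⟩
    by_cases h : a = 1 <;> simp [Y, wrOne, h]
    exact hy
  have hXle : wrLE X C₁₂ := by
    refine Or.inr ⟨h12.symm, fun a => ?_⟩
    by_cases h : a = 1
    · simpa [X, h] using hxc
    · simp only [X, if_neg h]; exact q12 a
  have hYle : wrLE Y C₂₁ := by
    refine Or.inr ⟨h21.symm, fun a => ?_⟩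
    by_cases h : a = 1
    · simpa [Y, h] using hyc
    · simp only [Y, if_neg h]; exact q21 a
  have := hcm X Y hXpos hXle hYpos hYle
  have := congrFun (congrArg Prod.snd this) 1
  simpa [wrMul, X, Y] using this

private lemma wreathRDP1_bwd {A G : Type*} [Group A] [LinearOrder A]
    [CovariantClass A A (· * ·) (· ≤ ·)]
    [CovariantClass A A (Function.swap (· * ·)) (· ≤ ·)]
    [Group G] [PartialOrder G]
    [CovariantClass G G (· * ·) (· ≤ ·)]
    [CovariantClass G G (Function.swap (· * ·)) (· ≤ ·)]
    (hdir : ∀ x y : G, ∃ z : G, x ≤ z ∧ y ≤ z)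
    (hG : RDP1With (fun a b : G => a * b) 1 (· ≤ ·)) :
    RDP1With (fun p q : A × (A → G) => wrMul p q) (wrOne A G) wrLE := by
  intro a₁ a₂ b₁ b₂ p1 p2 p3 p4 heq
  simp only [] at heq ⊢
  have hfst : a₁.1 * a₂.1 = b₁.1 * b₂.1 := congrArg Prod.fst heq
  have hsnd : ∀ a : A, a₁.2 a * a₂.2 (a * a₁.1) = b₁.2 a * b₂.2 (a * b₁.1) :=
    fun a => congrFun (congrArg Prod.snd heq) a
  -- trivial element facts
  have wrone_eq : ∀ x : A × (A → G), wrLE (wrOne A G) x → wrLE x (wrOne A G) →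
      x = wrOne A G := by
    rintro x (h | ⟨h, hf⟩) (h' | ⟨h', hf'⟩)
    · exact absurd (h.trans h') (lt_irrefl _)
    · rw [← h'] at h; exact absurd h (lt_irrefl _)
    · rw [← h] at h'; exact absurd h' (lt_irrefl _)
    · exact Prod.ext h' (funext fun a => le_antisymm (hf' a) (hf a))
  have mul_one' : ∀ x : A × (A → G), wrMul x (wrOne A G) = x := by
    intro x; simp [wrMul, wrOne]
  have one_mul' : ∀ x : A × (A → G), wrMul (wrOne A G) x = x := by
    intro x; simp [wrMul, wrOne]
  rcases lt_trichotomy a₁.1 b₁.1 with h | h | h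
  · -- case a₁.1 < b₁.1
    refine ⟨a₁, wrOne A G,
      (a₁.1⁻¹ * b₁.1, fun c => (a₁.2 (c * a₁.1⁻¹))⁻¹ * b₁.2 (c * a₁.1⁻¹)), b₂,
      p1, Or.inr ⟨rfl, fun a => le_refl _⟩, Or.inl ?_, p4, (mul_one' a₁).symm, ?_, ?_,
      (one_mul' b₂).symm, ?_⟩
    · -- 1 < a₁.1⁻¹ * b₁.1
      show (1 : A) < a₁.1⁻¹ * b₁.1
      have h2 := mul_le_mul_right h.le a₁.1⁻¹
      rw [inv_mul_cancel] at h2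
      refine lt_of_le_of_ne h2 fun hc => ?_
      have h3 : a₁.1 * 1 = a₁.1 * (a₁.1⁻¹ * b₁.1) := congrArg _ hc
      rw [mul_one, mul_inv_cancel_left] at h3
      rw [h3] at h
      exact lt_irrefl _ h
    · -- a₂ = c₂₁ * b₂
      refine Prod.ext ?_ (funext fun a => ?_)
      · show a₂.1 = a₁.1⁻¹ * b₁.1 * b₂.1
        rw [mul_assoc, ← hfst, inv_mul_cancel_left]
      · show a₂.2 a = (a₁.2 (a * a₁.1⁻¹))⁻¹ * b₁.2 (a * a₁.1⁻¹) *
          b₂.2 (a * (a₁.1⁻¹ * b₁.1))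
        have := hsnd (a * a₁.1⁻¹)
        rw [inv_mul_cancel_right] at this
        rw [mul_assoc, ← mul_assoc a, ← this, inv_mul_cancel_left]
    · -- b₁ = a₁ * c₂₁
      refine Prod.ext ?_ (funext fun a => ?_)
      · show b₁.1 = a₁.1 * (a₁.1⁻¹ * b₁.1)
        rw [mul_inv_cancel_left]
      · show b₁.2 a = a₁.2 a * ((a₁.2 (a * a₁.1 * a₁.1⁻¹))⁻¹ * b₁.2 (a * a₁.1 * a₁.1⁻¹))
        rw [mul_inv_cancel_right, mul_inv_cancel_left]
    · -- commutation : x ≤ wrOne forces x = wrOne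
      intro x y hx hxle hy hyle
      rw [wrone_eq x hx hxle, one_mul', mul_one']
  · -- case a₁.1 = b₁.1
    have hm : a₂.1 = b₂.1 := by
      rw [h] at hfst; exact mul_left_cancel hfst
    obtain ⟨w₁, hw1a, hw1b, hw1c⟩ :
        ∃ w₁ : A → G, (∀ a, 1 ≤ w₁ a * a₁.2 a) ∧ (∀ a, 1 ≤ w₁ a * b₁.2 a) ∧
          (1 < a₁.1 ∨ (1 = a₁.1 ∧ ∀ a, w₁ a = 1)) := by
      rcases p1 with hn | ⟨hn, hf⟩
      · have := fun a => hdir (a₁.2 a)⁻¹ (b₁.2 a)⁻¹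
        choose w hwf hwh using this
        refine ⟨w, fun a => ?_, fun a => ?_, Or.inl hn⟩
        · have := mul_le_mul_left (hwf a) (a₁.2 a)
          rwa [inv_mul_cancel] at this
        · have := mul_le_mul_left (hwh a) (b₁.2 a)
          rwa [inv_mul_cancel] at this
      · rcases p3 with hn' | ⟨hn', hh⟩
        · rw [← h, ← hn] at hn'; exact absurd hn' (lt_irrefl _)
        · exact ⟨fun _ => 1, fun a => by rw [one_mul]; exact hf a,
            fun a => by rw [one_mul]; exact hh a, Or.inr ⟨hn, fun _ => rfl⟩⟩
    obtain ⟨w₂, hw2a, hw2b, hw2c⟩ :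
        ∃ w₂ : A → G, (∀ a, 1 ≤ a₂.2 a * w₂ a) ∧ (∀ a, 1 ≤ b₂.2 a * w₂ a) ∧
          (1 < a₂.1 ∨ (1 = a₂.1 ∧ ∀ a, w₂ a = 1)) := by
      rcases p2 with hn | ⟨hn, hf⟩
      · have := fun a => hdir (a₂.2 a)⁻¹ (b₂.2 a)⁻¹
        choose w hwf hwh using this
        refine ⟨w, fun a => ?_, fun a => ?_, Or.inl hn⟩
        · have := mul_le_mul_right (hwf a) (a₂.2 a)
          rwa [mul_inv_cancel] at this
        · have := mul_le_mul_right (hwh a) (b₂.2 a)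
          rwa [mul_inv_cancel] at this
      · rcases p4 with hn' | ⟨hn', hh⟩
        · rw [← hm, ← hn] at hn'; exact absurd hn' (lt_irrefl _)
        · exact ⟨fun _ => 1, fun a => by rw [mul_one]; exact hf a,
            fun a => by rw [mul_one]; exact hh a, Or.inr ⟨hn, fun _ => rfl⟩⟩
    have main : ∀ a : A, ∃ k P Q R : G,
        1 ≤ w₁ a * k ∧ 1 ≤ P ∧ 1 ≤ Q ∧ 1 ≤ R * w₂ (a * a₁.1) ∧
        a₁.2 a = k * P ∧ a₂.2 (a * a₁.1) = Q * R ∧ b₁.2 a = k * Q ∧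
        b₂.2 (a * a₁.1) = P * R ∧
        ∀ x y : G, 1 ≤ x → x ≤ P → 1 ≤ y → y ≤ Q → x * y = y * x := by
      intro a
      refine wreathRDP1_key hG _ _ _ _ _ _ ?_ (hw1a a) (hw1b a) (hw2a (a * a₁.1)) (hw2b (a * a₁.1))
      have := hsnd a
      rwa [← h] at this
    choose k P Q R hk hP hQ hR e1 e2 e3 e4 hcm using main
    have extract : ∀ (x : A × (A → G)) (F : A → G), wrLE (wrOne A G) x →
        wrLE x ((1 : A), F) → x.1 = 1 ∧ (∀ a, 1 ≤ x.2 a) ∧ (∀ a, x.2 a ≤ F a) := by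
      rintro x F (h1 | ⟨h1, h1'⟩) (h2 | ⟨h2, h2'⟩)
      · exact absurd (h1.trans h2) (lt_irrefl _)
      · rw [h2] at h1; exact absurd h1 (lt_irrefl _)
      · rw [← h1] at h2; exact absurd h2 (lt_irrefl _)
      · exact ⟨h2, h1', h2'⟩
    refine ⟨(a₁.1, k), ((1 : A), fun c => P (c * a₁.1⁻¹)),
      ((1 : A), fun c => Q (c * a₁.1⁻¹)), (a₂.1, fun c => R (c * a₁.1⁻¹)),
      ?_, Or.inr ⟨rfl, fun c => hP _⟩, Or.inr ⟨rfl, fun c => hQ _⟩, ?_, ?_, ?_, ?_, ?_, ?_⟩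
    · rcases hw1c with hn | ⟨hn, hw⟩
      · exact Or.inl hn
      · refine Or.inr ⟨hn, fun a => ?_⟩
        have := hk a; rwa [hw a, one_mul] at this
    · rcases hw2c with hn | ⟨hn, hw⟩
      · exact Or.inl hn
      · refine Or.inr ⟨hn, fun a => ?_⟩
        have := hR (a * a₁.1⁻¹); rwa [hw _, mul_one] at this
    · refine Prod.ext ?_ (funext fun a => ?_)
      · show a₁.1 = a₁.1 * 1; rw [mul_one]
      · show a₁.2 a = k a * P (a * a₁.1 * a₁.1⁻¹)
        rw [mul_inv_cancel_right]; exact e1 a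
    · refine Prod.ext ?_ (funext fun a => ?_)
      · show a₂.1 = 1 * a₂.1; rw [one_mul]
      · show a₂.2 a = Q (a * a₁.1⁻¹) * R (a * 1 * a₁.1⁻¹)
        rw [mul_one]
        have := e2 (a * a₁.1⁻¹)
        rwa [inv_mul_cancel_right] at this
    · refine Prod.ext ?_ (funext fun a => ?_)
      · show b₁.1 = a₁.1 * 1; rw [mul_one]; exact h.symm
      · show b₁.2 a = k a * Q (a * a₁.1 * a₁.1⁻¹)
        rw [mul_inv_cancel_right]; exact e3 a
    · refine Prod.ext ?_ (funext fun a => ?_)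
      · show b₂.1 = 1 * a₂.1; rw [one_mul]; exact hm.symm
      · show b₂.2 a = P (a * a₁.1⁻¹) * R (a * 1 * a₁.1⁻¹)
        rw [mul_one]
        have := e4 (a * a₁.1⁻¹)
        rwa [inv_mul_cancel_right] at this
    · intro x y hx hxle hy hyle
      obtain ⟨hx1, hx2, hx3⟩ := extract x _ hx hxle
      obtain ⟨hy1, hy2, hy3⟩ := extract y _ hy hyle
      refine Prod.ext ?_ (funext fun a => ?_)
      · show x.1 * y.1 = y.1 * x.1; rw [hx1, hy1]
      · show x.2 a * y.2 (a * x.1) = y.2 a * x.2 (a * y.1)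
        rw [hx1, hy1, mul_one]
        exact hcm (a * a₁.1⁻¹) (x.2 a) (y.2 a) (hx2 a) (hx3 a) (hy2 a) (hy3 a)
  · -- case b₁.1 < a₁.1
    refine ⟨b₁, (b₁.1⁻¹ * a₁.1, fun c => (b₁.2 (c * b₁.1⁻¹))⁻¹ * a₁.2 (c * b₁.1⁻¹)),
      wrOne A G, a₂,
      p3, Or.inl ?_, Or.inr ⟨rfl, fun a => le_refl _⟩, p2, ?_,
      (one_mul' a₂).symm, (mul_one' b₁).symm, ?_, ?_⟩
    · show (1 : A) < b₁.1⁻¹ * a₁.1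
      have h2 := mul_le_mul_right h.le b₁.1⁻¹
      rw [inv_mul_cancel] at h2
      refine lt_of_le_of_ne h2 fun hc => ?_
      have h3 : b₁.1 * 1 = b₁.1 * (b₁.1⁻¹ * a₁.1) := congrArg _ hc
      rw [mul_one, mul_inv_cancel_left] at h3
      rw [h3] at h
      exact lt_irrefl _ h
    · -- a₁ = b₁ * c₁₂
      refine Prod.ext ?_ (funext fun a => ?_)
      · show a₁.1 = b₁.1 * (b₁.1⁻¹ * a₁.1)
        rw [mul_inv_cancel_left]
      · show a₁.2 a = b₁.2 a * ((b₁.2 (a * b₁.1 * b₁.1⁻¹))⁻¹ * a₁.2 (a * b₁.1 * b₁.1⁻¹))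
        rw [mul_inv_cancel_right, mul_inv_cancel_left]
    · -- b₂ = c₁₂ * a₂
      refine Prod.ext ?_ (funext fun a => ?_)
      · show b₂.1 = b₁.1⁻¹ * a₁.1 * a₂.1
        rw [mul_assoc, hfst, inv_mul_cancel_left]
      · show b₂.2 a = (b₁.2 (a * b₁.1⁻¹))⁻¹ * a₁.2 (a * b₁.1⁻¹) *
          a₂.2 (a * (b₁.1⁻¹ * a₁.1))
        have := hsnd (a * b₁.1⁻¹)
        rw [inv_mul_cancel_right] at this
        rw [mul_assoc, ← mul_assoc a, this, inv_mul_cancel_left]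
    · intro x y hx hxle hy hyle
      rw [wrone_eq y hy hyle, one_mul', mul_one']

/-- For a linearly ordered group `A` and a directed po-group `G`,
the unrestricted Wreath product `A Wr G` satisfies RDP₁ iff `G` does. -/
theorem wreath_rdp1_iff {A G : Type*} [Group A] [LinearOrder A]
    [CovariantClass A A (· * ·) (· ≤ ·)]
    [CovariantClass A A (Function.swap (· * ·)) (· ≤ ·)]
    [Group G] [PartialOrder G]
    [CovariantClass G G (· * ·) (· ≤ ·)]
    [CovariantClass G G (Function.swap (· * ·)) (· ≤ ·)]
    (hdir : ∀ x y : G, ∃ z : G, x ≤ z ∧ y ≤ z) :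
    RDP1With (fun p q : A × (A → G) => wrMul p q) (wrOne A G) wrLE ↔
      RDP1With (fun a b : G => a * b) 1 (· ≤ ·) :=
  ⟨fun hW => wreathRDP1_fwd hW, fun hG => wreathRDP1_bwd hdir hG⟩
end
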